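/- arXiv:2212.07804 — 4 statements merged into one kernel-verified Lean document; each statement's English description precedes it below -/
import Mathlib

section
/- Let (Ω, F, (F_n), P) be a filtered atomic probability space with associated collection ℰ, and let R ⊆ ℰ be a nested collection with Carleson constant [[R]] = ∞. Then for any ε̃ > 0, n ∈ ℕ and k ∈ ℕ there exist families of sets T_0, T_1, …, T_n and a set I_0 ∈ R such that: (i) T_0 = {I_0}; (ii) T_j ⊆ G_{kj}(R, I_0) for every j ∈ {1, …, n}; (iii) for every j ∈ {1, …, n} and every A ∈ T_{j−1}, P(A ∩ T_j*) > (1 − ε̃) P(A); (iv) each T_j, j ∈ {1, …, n}, is a finite family. -/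
open MeasureTheory ENNReal

noncomputable section

namespace Paper

/-- A filtered atomic probability space structure on `(Ω, m0, P)`:
an increasing sequence of finite measurable partitions `part n` of `Ω` into atoms of
positive measure (with `part 0 = {univ}`, so that the `0`-th σ-algebra is trivial),
generating the ambient σ-algebra, together with a choice `star n A` of a child of
maximal measure for every atom `A` of `part n`. -/
structure FilteredAtomic (Ω : Type*) [m0 : MeasurableSpace Ω] (P : Measure Ω) where
  part : ℕ → Finset (Set Ω)
  part_zero : part 0 = {Set.univ}
  meas : ∀ n, ∀ A ∈ part n, MeasurableSet A
  pos : ∀ n, ∀ A ∈ part n, 0 < P A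
  disj : ∀ n, (part n : Set (Set Ω)).PairwiseDisjoint id
  cover : ∀ n, ⋃₀ (part n : Set (Set Ω)) = Set.univ
  refined : ∀ n, ∀ A ∈ part (n + 1), ∃ B ∈ part n, A ⊆ B
  gen : m0 = ⨆ n, MeasurableSpace.generateFrom (part n : Set (Set Ω))
  star : ℕ → Set Ω → Set Ω
  star_mem : ∀ n, ∀ A ∈ part n, star n A ∈ part (n + 1)
  star_sub : ∀ n, ∀ A ∈ part n, star n A ⊆ A
  star_max : ∀ n, ∀ A ∈ part n, ∀ B ∈ part (n + 1), B ⊆ A → P B ≤ P (star n A)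

variable {Ω : Type*} [m0 : MeasurableSpace Ω] {P : Measure Ω}

/-- The filtration `F_n` generated by the atoms of the `n`-th partition
(`F_0` is the trivial σ-algebra since `part 0 = {univ}`). -/
def FilteredAtomic.filt (F : FilteredAtomic Ω P) (n : ℕ) : MeasurableSpace Ω :=
  MeasurableSpace.generateFrom (F.part n : Set (Set Ω))

/-- The collection 𝒜 of all atoms. -/
def FilteredAtomic.atoms (F : FilteredAtomic Ω P) : Set (Set Ω) :=
  ⋃ n, (F.part n : Set (Set Ω))

/-- The collection 𝒞 = {star A : A ∈ 𝒜}. -/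
def FilteredAtomic.starSets (F : FilteredAtomic Ω P) : Set (Set Ω) :=
  {B | ∃ n, ∃ A ∈ F.part n, B = F.star n A}

/-- The collection ℰ = 𝒜 \ 𝒞. -/
def FilteredAtomic.eColl (F : FilteredAtomic Ω P) : Set (Set Ω) :=
  F.atoms \ F.starSets

/-- The collection ℬ = {Ã : A ∈ 𝒜, P(Ã) > 0}, where Ã = A \ star A. -/
def FilteredAtomic.bColl (F : FilteredAtomic Ω P) : Set (Set Ω) :=
  {S | (∃ n, ∃ A ∈ F.part n, S = A \ F.star n A) ∧ 0 < P S}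

/-- The Carleson constant [[R]] of a collection of sets. -/
def carleson (P : Measure Ω) (R : Set (Set Ω)) : ℝ≥0∞ :=
  ⨆ I ∈ R, (P I)⁻¹ * ∑' J : {J : Set Ω // J ∈ R ∧ J ⊆ I}, P (J : Set Ω)

/-- A collection is nested if any two members are disjoint or comparable. -/
def Nested (R : Set (Set Ω)) : Prop :=
  ∀ A ∈ R, ∀ B ∈ R, (A ∩ B).Nonempty → A ⊆ B ∨ B ⊆ A

/-- `G1 R A`: the maximal members of `R` strictly contained in `A`. -/
def G1 (R : Set (Set Ω)) (A : Set Ω) : Set (Set Ω) :=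
  {B | B ∈ R ∧ B ⊂ A ∧ ∀ C ∈ R, C ⊂ A → B ⊆ C → B = C}

/-- `Gk R k A`: the `k`-th generation of `R` inside `A`. -/
def Gk (R : Set (Set Ω)) : ℕ → Set Ω → Set (Set Ω)
  | 0, A => {A}
  | k + 1, A => ⋃ J ∈ Gk R k A, G1 R J

/-- Martingale difference `E[f|F_{n+1}] - E[f|F_n]`; with the present indexing this is the
paper's `Δ_{n+1} f`, so `fun n => F.mdiff f n` enumerates `Δ_1 f, Δ_2 f, …`. -/
def FilteredAtomic.mdiff (F : FilteredAtomic Ω P) {X : Type*} [NormedAddCommGroup X]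
    [NormedSpace ℝ X] [CompleteSpace X] (f : Ω → X) (n : ℕ) : Ω → X :=
  P[f|F.filt (n + 1)] - P[f|F.filt n]

/-- `(‖E f‖^p + ∑_{n ≥ 1} ‖E[f|F_n] - E[f|F_{n-1}]‖_{L^p}^p)^{1/p}` as an `ℝ≥0∞` number. -/
def FilteredAtomic.mtBound (F : FilteredAtomic Ω P) {X : Type*} [NormedAddCommGroup X]
    [NormedSpace ℝ X] [CompleteSpace X] (f : Ω → X) (p : ℝ) : ℝ≥0∞ :=
  ((‖∫ ω, f ω ∂P‖₊ : ℝ≥0∞) ^ p +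
    ∑' n : ℕ, eLpNorm (F.mdiff f n) (ENNReal.ofReal p) P ^ p) ^ (1 / p)

/-- `M` is a scalar martingale type `p` constant for the filtered space. -/
def ScalarMT (F : FilteredAtomic Ω P) (p M : ℝ) : Prop :=
  1 ≤ M ∧ ∀ g : Ω → ℝ, MemLp g (ENNReal.ofReal p) P →
    eLpNorm g (ENNReal.ofReal p) P ≤ ENNReal.ofReal M * F.mtBound g p

/-- The dyadic interval `[k/2^n, (k+1)/2^n) ⊆ [0,1)` (for `k < 2^n`). -/
def dyadic (n k : ℕ) : Set ℝ := Set.Ico ((k : ℝ) / 2 ^ n) (((k : ℝ) + 1) / 2 ^ n)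

/-- The Haar function `h_I = 1_{I⁺} - 1_{I⁻}` of the dyadic interval `I = [k/2^n, (k+1)/2^n)`. -/
def haarFn (n k : ℕ) : ℝ → ℝ :=
  (dyadic (n + 1) (2 * k)).indicator 1 - (dyadic (n + 1) (2 * k + 1)).indicator 1

/-- `X` has Haar type `p` with constant `C`: for every finitely supported family of vectors
indexed by dyadic subintervals of `[0,1)` (encoded as pairs `(n,k)` with `k < 2^n`),
`‖∑ x_I h_I‖_{L^p([0,1);X)} ≤ C (∑ ‖x_I‖^p |I|)^{1/p}`. -/
def HaarTypeWith (X : Type*) [NormedAddCommGroup X] [NormedSpace ℝ X] (p C : ℝ) : Prop :=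
  ∀ s : Finset (ℕ × ℕ), (∀ q ∈ s, q.2 < 2 ^ q.1) → ∀ x : ℕ × ℕ → X,
    (∫ t in Set.Ico (0 : ℝ) 1, ‖∑ q ∈ s, haarFn q.1 q.2 t • x q‖ ^ p) ^ (1 / p) ≤
      C * (∑ q ∈ s, ‖x q‖ ^ p * ((2 : ℝ) ^ q.1)⁻¹) ^ (1 / p)

/-- The order `≺` on atoms: earlier generation first, and within a generation larger
measure first. -/
def Prec (F : FilteredAtomic Ω P) (B₁ B₂ : Set Ω) : Prop :=
  ∃ l m : ℕ, B₁ ∈ F.part l ∧ B₂ ∈ F.part m ∧ (l < m ∨ (l = m ∧ P B₂ < P B₁))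

/-- `U_j = {B ∈ G_1(ℰ, Y_{j-1}) : B ≺ Y_j}`. -/
def Uset (F : FilteredAtomic Ω P) (Y : ℕ → Set Ω) (j : ℕ) : Set (Set Ω) :=
  {B | B ∈ G1 F.eColl (Y (j - 1)) ∧ Prec F B (Y j)}

/-- The sequence `Y` satisfies condition `D_m(A)`. -/
def CondD (F : FilteredAtomic Ω P) (A : Set Ω) (Y : ℕ → Set Ω) (m : ℕ) : Prop :=
  Y 0 = A ∧ (∀ j ∈ Finset.Icc 1 m, Y j ∈ G1 F.eColl (Y (j - 1))) ∧
    ∑ j ∈ Finset.Icc 1 m, P (⋃₀ Uset F Y j) ≤ 2⁻¹ * P A ∧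
    2⁻¹ * P A ≤ P (Y m) + ∑ j ∈ Finset.Icc 1 m, P (⋃₀ Uset F Y j)

/-- The collection ℰ supports all initial segments of a generalized Haar system with
constant `K`.  Dyadic intervals in `𝒟_n` are encoded as pairs `(j,k)`, `j ≤ n`, `k < 2^j`,
corresponding to `[k/2^j, (k+1)/2^j)`; `ε = δ·2^{-n-1}`. -/
def SupportsHaar (F : FilteredAtomic Ω P) (K : ℝ) : Prop :=
  0 < K ∧ ∀ (n : ℕ) (δ : ℝ), 0 < δ →
    ∃ (C : ℕ × ℕ → Set (Set Ω)) (g : ℕ × ℕ → Ω → ℝ) (A0 : Set Ω) (S : ℕ),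
      A0 ∈ F.eColl ∧
      -- (A1)
      C (0, 0) = {A0} ∧
      -- (A2)
      (∀ j k, j ≤ n → k < 2 ^ j → C (j, k) ⊆ {A | A ∈ F.eColl ∧ A ⊆ A0}) ∧
      -- (A3)
      (∀ j k, j ≤ n → k < 2 ^ j → (C (j, k)).PairwiseDisjoint id) ∧
      -- (A4)
      (∀ j k l i, j ≤ n → k < 2 ^ j → l ≤ n → i < 2 ^ l →
        ((⋃₀ C (j, k) ⊆ ⋃₀ C (l, i) ↔ dyadic j k ⊆ dyadic l i) ∧
          ((⋃₀ C (j, k) ∩ ⋃₀ C (l, i)).Nonempty ↔ (dyadic j k ∩ dyadic l i).Nonempty))) ∧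
      -- (A5)
      (∀ j k, j + 1 ≤ n → k < 2 ^ j →
        (∀ ω, g (j, k) ω ∈ Set.Icc (-1 : ℝ) 1) ∧
        Function.support (g (j, k)) ⊆ ⋃₀ C (j, k) ∧
        ⋃₀ C (j + 1, 2 * k) ⊆ {ω | g (j, k) ω = 1} ∧
        ⋃₀ C (j + 1, 2 * k + 1) ⊆ {ω | g (j, k) ω = -1}) ∧
      -- (A6)
      (∀ j k, j ≤ n → k < 2 ^ j → ∀ A ∈ C (j, k), MeasurableSet[F.filt S] A) ∧
      -- (A7)
      (∀ j k, j + 1 ≤ n → k < 2 ^ j → Measurable[F.filt S] (g (j, k))) ∧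
      -- (A8)
      (∀ A ∈ F.part S, ∀ m, 1 ≤ m → m ≤ S →
        ∀ j k j' k', j + 1 ≤ n → k < 2 ^ j → j' + 1 ≤ n → k' < 2 ^ j' →
          ¬ F.mdiff (g (j, k)) (m - 1) =ᵐ[P.restrict A] (0 : Ω → ℝ) →
          ¬ F.mdiff (g (j', k')) (m - 1) =ᵐ[P.restrict A] (0 : Ω → ℝ) →
          (j, k) = (j', k')) ∧
      -- (A9)
      (∀ j k, j + 1 ≤ n → k < 2 ^ j →
        ∑' i : ℕ, eLpNorm (F.mdiff (g (j, k)) i) 1 P ≤ ENNReal.ofReal K * P (⋃₀ C (j, k))) ∧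
      -- (A10)
      (∀ j k, j ≤ n → k < 2 ^ j →
        ENNReal.ofReal (((2 : ℝ) ^ j)⁻¹ - 2 * (δ * ((2 : ℝ) ^ (n + 1))⁻¹)) * P A0 ≤
            P (⋃₀ C (j, k)) ∧
          P (⋃₀ C (j, k)) ≤ ENNReal.ofReal (((2 : ℝ) ^ j)⁻¹) * P A0)

end Paper

/-!
Write `genMass R P k M A = ∑_{i<M} P(⋃ G_{ki}(R, A))`. Summing over generations,
`∑_{J ∈ R, J ⊆ I} P(J) = ∑_m P(⋃ G_m(R, I))`, and the generation masses decrease in `m`, so an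
infinite Carleson constant makes `genMass k M I / P(I)` unbounded. Fix `L = c^n` and the least `M`
such that `genMass k M I₀ > L P(I₀)` for some `I₀ ∈ R`; then `genMass k (M-1) ≤ L P` on all of `R`.
As `genMass k (m+1) B = P(B) + ∑_{C ∈ G_k(R, B)} genMass k m C`, if `genMass k (m+1) B` exceeds
`(L - c^i) P(B)` then all but an `ε`-fraction of `B` is covered by children `C ∈ G_k(R, B)` with
`genMass k m C > (L - c^{i+1}) P(C)`: otherwise the lighter children and the uncovered part of `B`
would keep the total at most `(L - c^i) P(B)`, because `c^i + 1 ≤ ε c^{i+1}`. Starting from `I₀`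
this step can be iterated `n` times, and finite subfamilies suffice at each step.
-/

open Set
open scoped NNReal

theorem ENNReal.tsum_le_mul_tsum_mul_of_antitone {f : ℕ → ℝ≥0∞} (hf : Antitone f) {k : ℕ}
    (hk : k ≠ 0) : ∑' m, f m ≤ k * ∑' i, f (k * i) := by
  have : NeZero k := ⟨hk⟩
  calc ∑' m, f m ≤ ∑' m, f (k * (m / k)) := ENNReal.tsum_le_tsum fun m => hf (Nat.mul_div_le m k)
    _ = ∑' p : ℕ × Fin k, f (k * p.1) := (Nat.divModEquiv k).tsum_eq fun p => f (k * p.1)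
    _ = ∑' i, k * f (k * i) := by
      simp [ENNReal.tsum_prod', tsum_fintype]
    _ = k * ∑' i, f (k * i) := ENNReal.tsum_mul_left

theorem exists_geometric_thresholds {ε : ℝ} (hε : 0 < ε) (hε1 : ε ≤ 1) :
    ∃ c : ℝ≥0, 1 ≤ c ∧ ∀ i : ℕ, ((c ^ i : ℝ≥0) : ℝ) + 1 ≤ ε * (c ^ (i + 1) : ℝ≥0) := by
  have hc : (1 : ℝ) ≤ 2 / ε := by rw [le_div_iff₀ hε]; linarith
  obtain ⟨c, hcR⟩ : ∃ c : ℝ≥0, (c : ℝ) = 2 / ε := ⟨⟨2 / ε, by positivity⟩, rfl⟩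
  refine ⟨c, by rw [← NNReal.coe_le_coe, hcR]; exact hc, fun i => ?_⟩
  have hci : (1 : ℝ) ≤ (2 / ε) ^ i := one_le_pow₀ hc
  have : ε * (2 / ε) ^ (i + 1) = 2 * (2 / ε) ^ i := by
    rw [pow_succ]
    field_simp
  rw [NNReal.coe_pow, NNReal.coe_pow, hcR]
  linarith

theorem exists_finite_tree {α : Type*} (good : ℕ → α → Prop) (Q : α → Set α → Prop)
    (hQ : ∀ a, Monotone (Q a)) {n : ℕ} {a₀ : α} (h₀ : good 0 a₀)
    (step : ∀ i < n, ∀ a, good i a → ∃ S : Set α, S.Finite ∧ (∀ b ∈ S, good (i + 1) b) ∧ Q a S) :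
    ∃ T : ℕ → Set α, T 0 = {a₀} ∧ ∀ j ≤ n, (T j).Finite ∧ (∀ a ∈ T j, good j a) ∧
      (j < n → ∀ a ∈ T j, Q a (T (j + 1))) := by
  choose! pick hpick using step
  let T : ℕ → Set α := fun j => Nat.rec {a₀} (fun j Tj => ⋃ a ∈ Tj, pick j a) j
  have hT : ∀ j ≤ n, (T j).Finite ∧ ∀ a ∈ T j, good j a := by
    intro j hj
    induction j with
    | zero => exact ⟨finite_singleton a₀, fun a ha => (mem_singleton_iff.1 ha) ▸ h₀⟩
    | succ j ih =>
      obtain ⟨hfin, hgood⟩ := ih (by omega)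
      have hpick' := fun a ha => hpick j (by omega) a (hgood a ha)
      refine ⟨hfin.biUnion fun a ha => (hpick' a ha).1, fun b hb => ?_⟩
      obtain ⟨a, ha, hb⟩ := mem_iUnion₂.1 hb
      exact (hpick' a ha).2.1 b hb
  refine ⟨T, rfl, fun j hj => ⟨(hT j hj).1, (hT j hj).2, fun hjn a ha => ?_⟩⟩
  exact hQ a (subset_biUnion_of_mem ha) (hpick j hjn a ((hT j hj).2 a ha)).2.2

section Pigeonhole

variable {Ω : Type*} [MeasurableSpace Ω] {μ : Measure Ω}

theorem exists_finite_subset_lt_measure_sUnion {𝒢 : Set (Set Ω)} (h𝒢 : 𝒢.Countable)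
    {c : ℝ≥0∞} (hc : c < μ (⋃₀ 𝒢)) : ∃ S ⊆ 𝒢, S.Finite ∧ c < μ (⋃₀ S) := by
  have := h𝒢.to_subtype
  have hdir : Directed (· ⊆ ·) fun t : Finset 𝒢 => ⋃ C ∈ t, (C : Set Ω) :=
    Monotone.directed_le fun s t hst => biUnion_subset_biUnion_left hst
  rw [sUnion_eq_iUnion, iUnion_eq_iUnion_finset, hdir.measure_iUnion, lt_iSup_iff] at hc
  obtain ⟨s, hs⟩ := hc
  refine ⟨Subtype.val '' (s : Set 𝒢), by simp, s.finite_toSet.image _, ?_⟩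
  rwa [sUnion_image]

-- `x = μ B`; `g`, `d` are the masses of the heavy and the light children, `s` is the `f`-mass of
-- the light ones.
theorem ofReal_one_sub_mul_lt_of_heavy_light {x g d s : ℝ≥0∞} {L a b : ℝ≥0} {ε : ℝ} (hx : x ≠ ⊤) (hε : ε ≤ 1)
    (hab : (a : ℝ) + 1 ≤ ε * b) (hbL : b ≤ L) (h : L * x < a * x + (x + (L * g + s)))
    (hbad : b * d + s ≤ L * d) (hcover : g + d ≤ x) : ENNReal.ofReal (1 - ε) * x < g := by
  have hg : g ≠ ⊤ := ne_top_of_le_ne_top hx (le_self_add.trans hcover)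
  have hd : d ≠ ⊤ := ne_top_of_le_ne_top hx (le_add_self.trans hcover)
  have hs : s ≠ ⊤ := ne_top_of_le_ne_top (by finiteness) (le_add_self.trans hbad)
  lift x to ℝ≥0 using hx
  lift g to ℝ≥0 using hg
  lift d to ℝ≥0 using hd
  lift s to ℝ≥0 using hs
  have h' : (L : ℝ) * x < a * x + (x + (L * g + s)) := by exact_mod_cast h
  have hbad' : (b : ℝ) * d + s ≤ L * d := by exact_mod_cast hbad
  have hcover' : (g : ℝ) + d ≤ x := by exact_mod_cast hcover
  have hbL' : (b : ℝ) ≤ L := by exact_mod_cast hbL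
  have hb : (0 : ℝ) < b := by nlinarith [a.coe_nonneg]
  have : (1 - ε) * x < g := by
    nlinarith [mul_le_mul_of_nonneg_right hbL' (sub_nonneg.2 hcover' : (0 : ℝ) ≤ x - (g + d)),
      x.coe_nonneg, mul_nonneg (x.coe_nonneg) (sub_nonneg.2 hab)]
  rw [← ofReal_coe_nnreal, ← ofReal_coe_nnreal (p := g), ← ENNReal.ofReal_mul (by linarith),
    ENNReal.ofReal_lt_ofReal_iff']
  exact ⟨this, (mul_nonneg (by linarith) x.coe_nonneg).trans_lt this⟩

theorem exists_finite_heavy_subfamily [IsFiniteMeasure μ] {𝒢 : Set (Set Ω)} {B : Set Ω}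
    (h𝒢 : 𝒢.Countable) (hdisj : 𝒢.PairwiseDisjoint id) (hmeas : ∀ C ∈ 𝒢, MeasurableSet C)
    (hsub : ∀ C ∈ 𝒢, C ⊆ B) (f : Set Ω → ℝ≥0∞) {L a b : ℝ≥0} {ε : ℝ} (hε : ε ≤ 1)
    (hab : (a : ℝ) + 1 ≤ ε * b) (hbL : b ≤ L) (hf : ∀ C ∈ 𝒢, f C ≤ L * μ C)
    (hB : L * μ B < a * μ B + (μ B + ∑' C : 𝒢, f C)) :
    ∃ S ⊆ 𝒢, S.Finite ∧ (∀ C ∈ S, L * μ C < b * μ C + f C) ∧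
      ENNReal.ofReal (1 - ε) * μ B < μ (⋃₀ S) := by
  set heavy := {C ∈ 𝒢 | L * μ C < b * μ C + f C}
  set light := {C ∈ 𝒢 | b * μ C + f C ≤ L * μ C}
  have hheavy𝒢 : heavy ⊆ 𝒢 := sep_subset _ _
  have hlight𝒢 : light ⊆ 𝒢 := sep_subset _ _
  suffices h : ENNReal.ofReal (1 - ε) * μ B < μ (⋃₀ heavy) by
    obtain ⟨S, hS, hSfin, hSμ⟩ := exists_finite_subset_lt_measure_sUnion (h𝒢.mono hheavy𝒢) h
    exact ⟨S, hS.trans hheavy𝒢, hSfin, fun C hC => (hS hC).2, hSμ⟩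
  have measure_sUnion_of_subset {𝒮 : Set (Set Ω)} (h𝒮 : 𝒮 ⊆ 𝒢) :
      μ (⋃₀ 𝒮) = ∑' C : 𝒮, μ C :=
    measure_sUnion (h𝒢.mono h𝒮) (hdisj.subset h𝒮) fun C hC => hmeas C (h𝒮 hC)
  have hsplit : ∑' C : 𝒢, f C ≤ ∑' C : heavy, f C + ∑' C : light, f C :=
    (ENNReal.tsum_mono_subtype f fun C hC => (lt_or_ge _ _).imp (⟨hC, ·⟩) (⟨hC, ·⟩)).trans
      (ENNReal.tsum_union_le f heavy light)
  have hheavy : ∑' C : heavy, f C ≤ L * μ (⋃₀ heavy) := by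
    rw [measure_sUnion_of_subset hheavy𝒢, ← ENNReal.tsum_mul_left]
    exact ENNReal.tsum_le_tsum fun C => hf C C.2.1
  have hlight : b * μ (⋃₀ light) + ∑' C : light, f C ≤ L * μ (⋃₀ light) := by
    rw [measure_sUnion_of_subset hlight𝒢, ← ENNReal.tsum_mul_left, ← ENNReal.tsum_mul_left,
      ← ENNReal.tsum_add]
    exact ENNReal.tsum_le_tsum fun C => C.2.2
  have hcover : μ (⋃₀ heavy) + μ (⋃₀ light) ≤ μ B := by
    have hdisj' : Disjoint (⋃₀ heavy) (⋃₀ light) :=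
      disjoint_sUnion_left.2 fun C hC => disjoint_sUnion_right.2 fun D hD =>
        hdisj hC.1 hD.1 (by rintro rfl; exact hC.2.not_ge hD.2)
    rw [← measure_union hdisj' (.sUnion (h𝒢.mono hlight𝒢) fun C hC => hmeas C hC.1)]
    exact measure_mono (union_subset (sUnion_subset fun C hC => hsub C hC.1)
      (sUnion_subset fun C hC => hsub C hC.1))
  exact ofReal_one_sub_mul_lt_of_heavy_light (measure_ne_top μ B) hε hab hbL
    (hB.trans_le (by gcongr; exact hsplit.trans (by gcongr))) hlight hcover

end Pigeonhole

namespace Paper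

section Generations

variable {Ω : Type*} {R : Set (Set Ω)}

theorem G1_pairwiseDisjoint (hR : Nested R) (A : Set Ω) : (G1 R A).PairwiseDisjoint id := by
  intro B hB C hC hBC
  by_contra hBC'
  rcases hR B hB.1 C hC.1 (not_disjoint_iff_nonempty_inter.1 hBC') with h | h
  · exact hBC (hB.2.2 C hC.1 hC.2.1 h)
  · exact hBC (hC.2.2 B hB.1 hB.2.1 h).symm

theorem mem_Gk_succ {m : ℕ} {A C : Set Ω} : C ∈ Gk R (m + 1) A ↔ ∃ J ∈ Gk R m A, C ∈ G1 R J := by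
  simp only [Gk, mem_iUnion, exists_prop]

theorem Gk_add (s t : ℕ) (A : Set Ω) : Gk R (s + t) A = ⋃ B ∈ Gk R s A, Gk R t B := by
  induction t with
  | zero => ext; simp [Gk]
  | succ t ih =>
    ext C
    simp only [← add_assoc, mem_Gk_succ, ih, mem_iUnion, exists_prop]
    tauto

theorem Gk_one (A : Set Ω) : Gk R 1 A = G1 R A := by
  simp [Gk]

theorem subset_of_mem_Gk {m : ℕ} {A C : Set Ω} (hC : C ∈ Gk R m A) : C ⊆ A := by
  induction m generalizing C with
  | zero => exact (mem_singleton_iff.1 hC).subset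
  | succ m ih =>
    obtain ⟨J, hJ, hCJ⟩ := mem_Gk_succ.1 hC
    exact hCJ.2.1.subset.trans (ih hJ)

theorem Gk_subset {m : ℕ} {A : Set Ω} (hA : A ∈ R) : Gk R m A ⊆ R := by
  cases m with
  | zero => simpa [Gk] using hA
  | succ m =>
    intro C hC
    obtain ⟨J, -, hCJ⟩ := mem_Gk_succ.1 hC
    exact hCJ.1

theorem Gk_pairwiseDisjoint (hR : Nested R) (m : ℕ) (A : Set Ω) :
    (Gk R m A).PairwiseDisjoint id := by
  induction m with
  | zero => exact pairwiseDisjoint_singleton A id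
  | succ m ih =>
    intro C hC C' hC' hCC'
    obtain ⟨J, hJ, hCJ⟩ := mem_Gk_succ.1 hC
    obtain ⟨J', hJ', hCJ'⟩ := mem_Gk_succ.1 hC'
    obtain rfl | hJJ' := eq_or_ne J J'
    · exact G1_pairwiseDisjoint hR J hCJ hCJ' hCC'
    · exact (ih hJ hJ' hJJ').mono hCJ.2.1.subset hCJ'.2.1.subset

theorem sUnion_Gk_succ_subset (m : ℕ) (A : Set Ω) : ⋃₀ Gk R (m + 1) A ⊆ ⋃₀ Gk R m A := by
  rintro x ⟨C, hC, hxC⟩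
  obtain ⟨J, hJ, hCJ⟩ := mem_Gk_succ.1 hC
  exact ⟨J, hJ, hCJ.2.1.subset hxC⟩

end Generations

def genMass {Ω : Type*} [MeasurableSpace Ω] (R : Set (Set Ω)) (P : Measure Ω) (k M : ℕ)
    (A : Set Ω) : ℝ≥0∞ :=
  ∑ i ∈ Finset.range M, P (⋃₀ Gk R (k * i) A)

namespace FilteredAtomic

variable {Ω : Type*} [MeasurableSpace Ω] {P : Measure Ω} (F : FilteredAtomic Ω P)

theorem exists_superset_mem_part {c b : ℕ} (hcb : c ≤ b) {B : Set Ω} (hB : B ∈ F.part b) :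
    ∃ D ∈ F.part c, B ⊆ D := by
  induction b, hcb using Nat.le_induction generalizing B with
  | base => exact ⟨B, hB, subset_rfl⟩
  | succ b _ ih =>
    obtain ⟨B', hB', hBB'⟩ := F.refined b B hB
    obtain ⟨D, hD, hB'D⟩ := ih hB'
    exact ⟨D, hD, hBB'.trans hB'D⟩

theorem lt_of_ssubset {a b : ℕ} {A B : Set Ω} (hA : A ∈ F.part a) (hB : B ∈ F.part b)
    (hAB : A ⊂ B) : b < a := by
  by_contra! hab
  obtain ⟨D, hD, hBD⟩ := F.exists_superset_mem_part hab hB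
  have hAD : A = D := by
    refine (F.disj a).elim (Finset.mem_coe.2 hA) (Finset.mem_coe.2 hD) ?_
    rw [id, id, not_disjoint_iff_nonempty_inter, inter_eq_left.2 (hAB.subset.trans hBD)]
    exact nonempty_of_measure_ne_zero (F.pos a A hA).ne'
  exact hAB.not_subset (hAD ▸ hBD)

def level (A : Set Ω) : ℕ := sInf {n | A ∈ F.part n}

theorem level_mem {A : Set Ω} (hA : A ∈ F.atoms) : A ∈ F.part (F.level A) :=
  Nat.sInf_mem (mem_iUnion.1 hA)

theorem level_lt_level {A B : Set Ω} (hA : A ∈ F.atoms) (hB : B ∈ F.atoms) (hAB : A ⊂ B) :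
    F.level B < F.level A :=
  F.lt_of_ssubset (F.level_mem hA) (F.level_mem hB) hAB

theorem level_le_level {A B : Set Ω} (hA : A ∈ F.atoms) (hB : B ∈ F.atoms) (hAB : A ⊆ B) :
    F.level B ≤ F.level A := by
  obtain rfl | hAB := hAB.eq_or_ssubset
  · rfl
  · exact (F.level_lt_level hA hB hAB).le

theorem exists_mem_G1_superset {R : Set (Set Ω)} (hR : R ⊆ F.atoms) {A J : Set Ω} (hJ : J ∈ R)
    (hJA : J ⊂ A) : ∃ B ∈ G1 R A, J ⊆ B := by
  obtain ⟨B, ⟨hBR, hJB, hBA⟩, hmin⟩ := (InvImage.wf F.level wellFounded_lt).has_min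
    {C | C ∈ R ∧ J ⊆ C ∧ C ⊂ A} ⟨J, hJ, subset_rfl, hJA⟩
  refine ⟨B, ⟨hBR, hBA, fun C hCR hCA hBC => ?_⟩, hJB⟩
  by_contra hBC'
  exact hmin C ⟨hCR, hJB.trans hBC, hCA⟩
    (F.level_lt_level (hR hBR) (hR hCR) (hBC.ssubset_of_ne hBC'))

theorem exists_mem_Gk {R : Set (Set Ω)} (hR : R ⊆ F.atoms) {I J : Set Ω} (hI : I ∈ R)
    (hJ : J ∈ R) (hJI : J ⊆ I) : ∃ m, J ∈ Gk R m I := by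
  obtain rfl | hJI' := eq_or_ne J I
  · exact ⟨0, mem_singleton J⟩
  obtain ⟨B, hB, hJB⟩ := F.exists_mem_G1_superset hR hJ (hJI.ssubset_of_ne hJI')
  have := F.level_lt_level (hR hB.1) (hR hI) hB.2.1
  have := F.level_le_level (hR hJ) (hR hB.1) hJB
  obtain ⟨m, hm⟩ := exists_mem_Gk hR hB.1 hJ hJB
  refine ⟨1 + m, ?_⟩
  rw [Gk_add, Gk_one]
  exact mem_biUnion hB hm
termination_by F.level J - F.level I

theorem atoms_countable : F.atoms.Countable :=
  countable_iUnion fun n => (F.part n).countable_toSet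

theorem measurableSet_of_mem_atoms {A : Set Ω} (hA : A ∈ F.atoms) : MeasurableSet A := by
  obtain ⟨n, hn⟩ := mem_iUnion.1 hA
  exact F.meas n A hn

theorem measure_ne_zero_of_mem_atoms {A : Set Ω} (hA : A ∈ F.atoms) : P A ≠ 0 := by
  obtain ⟨n, hn⟩ := mem_iUnion.1 hA
  exact (F.pos n A hn).ne'

variable {R : Set (Set Ω)}

theorem Gk_countable (hR : R ⊆ F.atoms) {m : ℕ} {A : Set Ω} (hA : A ∈ R) :
    (Gk R m A).Countable :=
  F.atoms_countable.mono ((Gk_subset hA).trans hR)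

theorem measurableSet_sUnion_Gk (hR : R ⊆ F.atoms) {m : ℕ} {A : Set Ω} (hA : A ∈ R) :
    MeasurableSet (⋃₀ Gk R m A) :=
  .sUnion (F.Gk_countable hR hA) fun _ hC => F.measurableSet_of_mem_atoms (hR (Gk_subset hA hC))

theorem measure_sUnion_Gk (hR : R ⊆ F.atoms) (hnest : Nested R) (m : ℕ) {A : Set Ω}
    (hA : A ∈ R) : P (⋃₀ Gk R m A) = ∑' C : Gk R m A, P C :=
  measure_sUnion (F.Gk_countable hR hA) (Gk_pairwiseDisjoint hnest m A)
    fun _ hC => F.measurableSet_of_mem_atoms (hR (Gk_subset hA hC))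

theorem measure_sUnion_Gk_add (hR : R ⊆ F.atoms) (hnest : Nested R) (s t : ℕ) {A : Set Ω}
    (hA : A ∈ R) : P (⋃₀ Gk R (s + t) A) = ∑' C : Gk R s A, P (⋃₀ Gk R t C) := by
  simp only [Gk_add, sUnion_iUnion]
  refine measure_biUnion (F.Gk_countable hR hA) ?_ fun C hC =>
    F.measurableSet_sUnion_Gk hR (Gk_subset hA hC)
  exact (Gk_pairwiseDisjoint hnest s A).mono fun C => sUnion_subset fun _ => subset_of_mem_Gk

theorem tsum_measure_le_tsum_measure_sUnion_Gk (hR : R ⊆ F.atoms) (hnest : Nested R)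
    {I : Set Ω} (hI : I ∈ R) :
    ∑' J : {J : Set Ω // J ∈ R ∧ J ⊆ I}, P J ≤ ∑' m, P (⋃₀ Gk R m I) :=
  calc ∑' J : {J : Set Ω // J ∈ R ∧ J ⊆ I}, P J
      ≤ ∑' J : ⋃ m, Gk R m I, P J :=
        ENNReal.tsum_mono_subtype (fun J => P J) fun _ hJ =>
          mem_iUnion.2 (F.exists_mem_Gk hR hI hJ.1 hJ.2)
    _ ≤ ∑' (m) (J : Gk R m I), P J := ENNReal.tsum_iUnion_le_tsum _ _
    _ = ∑' m, P (⋃₀ Gk R m I) := tsum_congr fun m => (F.measure_sUnion_Gk hR hnest m hI).symm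

theorem genMass_succ (hR : R ⊆ F.atoms) (hnest : Nested R) (k M : ℕ) {A : Set Ω} (hA : A ∈ R) :
    genMass R P k (M + 1) A = P A + ∑' C : Gk R k A, genMass R P k M C := by
  simp only [genMass, Finset.sum_range_succ', mul_zero, mul_add_one, add_comm _ k,
    F.measure_sUnion_Gk_add hR hnest k _ hA]
  rw [Summable.tsum_finsetSum fun _ _ => ENNReal.summable, add_comm]
  simp [Gk]

theorem exists_mul_lt_tsum_measure [IsFiniteMeasure P] (hR : R ⊆ F.atoms)
    (hcarl : carleson P R = ⊤) {c : ℝ≥0∞} (hc : c ≠ ⊤) :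
    ∃ I ∈ R, c * P I < ∑' J : {J : Set Ω // J ∈ R ∧ J ⊆ I}, P J := by
  have : c < carleson P R := hcarl ▸ hc.lt_top
  simp only [carleson, lt_iSup_iff, exists_prop] at this
  obtain ⟨I, hI, hcI⟩ := this
  rw [← ENNReal.div_eq_inv_mul, ENNReal.lt_div_iff_mul_lt
    (.inl (F.measure_ne_zero_of_mem_atoms (hR hI))) (.inl (measure_ne_top P I))] at hcI
  exact ⟨I, hI, hcI⟩

theorem exists_lt_genMass [IsFiniteMeasure P] (hR : R ⊆ F.atoms) (hnest : Nested R)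
    (hcarl : carleson P R = ⊤) (k : ℕ) (L : ℝ≥0) :
    ∃ M, ∃ I ∈ R, L * P I < genMass R P k M I := by
  obtain ⟨I, hI, hLI⟩ := F.exists_mul_lt_tsum_measure hR hcarl (c := k * L) (by finiteness)
  have hPI := F.measure_ne_zero_of_mem_atoms (hR hI)
  suffices L * P I < ∑' i, P (⋃₀ Gk R (k * i) I) by
    rw [ENNReal.tsum_eq_iSup_nat, lt_iSup_iff] at this
    exact this.imp fun M hM => ⟨I, hI, hM⟩
  obtain rfl | hk := eq_or_ne k 0
  · simpa [Gk, ENNReal.tsum_const_eq_top_of_ne_zero hPI] using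
      ENNReal.mul_lt_top coe_lt_top (measure_lt_top P I)
  refine (ENNReal.mul_lt_mul_iff_right (Nat.cast_ne_zero.2 hk) (ENNReal.natCast_ne_top k)).1 ?_
  calc k * (L * P I) = k * L * P I := (mul_assoc _ _ _).symm
    _ < ∑' J : {J : Set Ω // J ∈ R ∧ J ⊆ I}, P J := hLI
    _ ≤ ∑' m, P (⋃₀ Gk R m I) := F.tsum_measure_le_tsum_measure_sUnion_Gk hR hnest hI
    _ ≤ k * ∑' i, P (⋃₀ Gk R (k * i) I) :=
      ENNReal.tsum_le_mul_tsum_mul_of_antitone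
        (antitone_nat_of_succ_le fun m => measure_mono (sUnion_Gk_succ_subset m I)) hk

theorem exists_minimal_lt_genMass [IsFiniteMeasure P] (hR : R ⊆ F.atoms) (hnest : Nested R)
    (hcarl : carleson P R = ⊤) (k : ℕ) (L : ℝ≥0) :
    ∃ M, ∃ I ∈ R, L * P I < genMass R P k M I ∧
      ∀ m < M, ∀ C ∈ R, genMass R P k m C ≤ L * P C := by
  classical
  have hex := F.exists_lt_genMass hR hnest hcarl k L
  obtain ⟨I, hI, hIL⟩ := Nat.find_spec hex
  exact ⟨Nat.find hex, I, hI, hIL, fun m hm C hC => not_lt.1 fun h => Nat.find_min hex hm ⟨C, hC, h⟩⟩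

theorem exists_finite_subset_Gk_of_lt_genMass [IsFiniteMeasure P] (hR : R ⊆ F.atoms)
    (hnest : Nested R) {k m : ℕ} {L a b : ℝ≥0} {ε : ℝ} (hε : ε ≤ 1) (hab : (a : ℝ) + 1 ≤ ε * b)
    (haL : a ≤ L) (hbL : b ≤ L) (hmin : ∀ m' < m, ∀ C ∈ R, genMass R P k m' C ≤ L * P C)
    {B : Set Ω} (hB : B ∈ R) (hBL : L * P B < a * P B + genMass R P k m B) :
    ∃ S ⊆ Gk R k B, S.Finite ∧ (∀ C ∈ S, L * P C < b * P C + genMass R P k (m - 1) C) ∧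
      ENNReal.ofReal (1 - ε) * P B < P (⋃₀ S) := by
  obtain ⟨m, rfl⟩ : ∃ m', m = m' + 1 := Nat.exists_eq_succ_of_ne_zero fun hm => by
    rw [hm, genMass, Finset.sum_range_zero, add_zero] at hBL
    exact hBL.not_ge (by gcongr)
  rw [F.genMass_succ hR hnest k m hB] at hBL
  exact exists_finite_heavy_subfamily (F.Gk_countable hR hB) (Gk_pairwiseDisjoint hnest k B)
    (fun C hC => F.measurableSet_of_mem_atoms (hR (Gk_subset hB hC))) (fun _ => subset_of_mem_Gk)
    _ hε hab hbL (fun C hC => hmin m m.lt_succ_self C (Gk_subset hB hC)) hBL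

end FilteredAtomic

end Paper

open Paper

open MeasureTheory ENNReal in
/-- Carleson–Garnett condensation lemma. -/
theorem statement_6 {Ω : Type*} [m0 : MeasurableSpace Ω] (P : Measure Ω)
    [IsProbabilityMeasure P] (F : Paper.FilteredAtomic Ω P)
    (R : Set (Set Ω)) (hRE : R ⊆ F.eColl) (hnest : Paper.Nested R)
    (hcarl : Paper.carleson P R = ⊤)
    (ε : ℝ) (hε : 0 < ε) (n k : ℕ) :
    ∃ (T : ℕ → Set (Set Ω)) (I0 : Set Ω), I0 ∈ R ∧
      -- (i)
      T 0 = {I0} ∧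
      -- (ii)
      (∀ j, 1 ≤ j → j ≤ n → T j ⊆ Paper.Gk R (k * j) I0) ∧
      -- (iii)
      (∀ j, 1 ≤ j → j ≤ n → ∀ A ∈ T (j - 1),
        ENNReal.ofReal (1 - ε) * P A < P (A ∩ ⋃₀ T j)) ∧
      -- (iv)
      (∀ j, 1 ≤ j → j ≤ n → (T j).Finite) := by
  have hR : R ⊆ F.atoms := fun _ hA => (hRE hA).1
  obtain ⟨c, hc, hcε⟩ := exists_geometric_thresholds (lt_min hε one_pos) (min_le_right ε 1)
  obtain ⟨M, I0, hI0, hI0c, hmin⟩ := F.exists_minimal_lt_genMass hR hnest hcarl k (c ^ n)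
  let good (i : ℕ) (B : Set Ω) : Prop := B ∈ Gk R (k * i) I0 ∧
    ((c ^ n : ℝ≥0) : ℝ≥0∞) * P B < (c ^ i : ℝ≥0) * P B + genMass R P k (M - i) B
  have step : ∀ i < n, ∀ B, good i B → ∃ S : Set (Set Ω), S.Finite ∧ (∀ C ∈ S, good (i + 1) C) ∧
      ENNReal.ofReal (1 - ε) * P B < P (B ∩ ⋃₀ S) := by
    intro i hi B ⟨hBgen, hBc⟩
    obtain ⟨S, hSG, hSfin, hSheavy, hSP⟩ := F.exists_finite_subset_Gk_of_lt_genMass hR hnest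
      (min_le_right ε 1) (hcε i) (pow_le_pow_right₀ hc hi.le) (pow_le_pow_right₀ hc hi)
      (fun m hm => hmin m (by omega)) (Gk_subset hI0 hBgen) hBc
    refine ⟨S, hSfin, fun C hC => ⟨?_, Nat.sub_sub M i 1 ▸ hSheavy C hC⟩, ?_⟩
    · rw [mul_add_one, Gk_add]
      exact mem_biUnion hBgen (hSG hC)
    · rw [inter_eq_right.2 (sUnion_subset fun C hC => subset_of_mem_Gk (hSG hC))]
      exact (mul_le_mul_left (ENNReal.ofReal_le_ofReal (by linarith [min_le_left ε 1])) _).trans_lt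
        hSP
  obtain ⟨T, hT0, hT⟩ := exists_finite_tree good
    (fun A S => ENNReal.ofReal (1 - ε) * P A < P (A ∩ ⋃₀ S))
    (fun A S S' hS h => h.trans_le (measure_mono (inter_subset_inter_right _ (sUnion_mono hS))))
    ⟨rfl, hI0c.trans_le le_add_self⟩ step
  refine ⟨T, I0, hI0, hT0, fun j _ hj B hB => ((hT j hj).2.1 B hB).1, fun j hj1 hj A hA => ?_,
    fun j _ hj => (hT j hj).1⟩
  obtain ⟨j, rfl⟩ := Nat.exists_eq_add_of_le' hj1
  exact (hT j (by omega)).2.2 (by omega) A hA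
end
end

section
/- Let X be a Banach space, 1 ≤ p < ∞, and let g_j : Ω → X, j ∈ ℕ, be a sequence of measurable functions on a probability space (Ω, Σ, P). Assume there exist a sequence (a_k)_{k ∈ ℕ} ∈ ℓ¹(ℕ) and measurable sets (D_k)_{k ∈ ℕ} such that P(supp g_j \ ⋃_{k ≥ j} D_k) = 0 for every j, and ∫_{D_{k+j}} ‖g_j‖^p dP ≤ |a_k|^p ‖g_j‖_{L^p(Ω;X)}^p for all k, j ∈ ℕ. If the series ∑_{j ∈ ℕ} g_j converges almost everywhere, then ‖∑_{j ∈ ℕ} g_j‖_{L^p(Ω;X)} ≤ (∑_{k ∈ ℕ} |a_k|) · (∑_{j ∈ ℕ} ‖g_j‖_{L^p(Ω;X)}^p)^{1/p}. -/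
open MeasureTheory ENNReal

noncomputable section

/-! Let `E_m := D_m \ ⋃_{l > m} D_l` be the set of points whose last visit to the `D`'s is at
time `m`; these sets are pairwise disjoint. Borel–Cantelli for the measures `‖g_j‖^p dP` shows
that each `g_j` vanishes a.e. on `limsup D`, so a.e. `g_j` lives on `⋃_{m ≥ j} E_m`, and then
`‖f‖ ≤ ∑_k v_k` with the lag-`k` parts `v_k := ∑_j 1_{E_{k+j}} ‖g_j‖`. Disjointness of the
`E_{k+j}` gives `‖v_k‖_p^p ≤ ∑_j ∫_{D_{k+j}} ‖g_j‖^p ≤ |a_k|^p ∑_j ‖g_j‖_p^p`, and Minkowski's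
inequality for the series `∑_k v_k` concludes. -/

open Filter Set Function Topology

section AlmostDisjoint

variable {Ω : Type*}

theorem tsum_indicator_eq_of_mem {M : Type*} [AddCommMonoid M] [TopologicalSpace M]
    {S : ℕ → Set Ω} (hS : Pairwise (Disjoint on S)) {i : ℕ} {ω : Ω} (hω : ω ∈ S i)
    (h : ℕ → Ω → M) : ∑' k, (S k).indicator (h k) ω = h i ω := by
  rw [tsum_eq_single i fun k hk => indicator_of_notMem ((hS hk).notMem_of_mem_right hω) _,
    indicator_of_mem hω]

theorem tsum_indicator_rpow {S : ℕ → Set Ω} (hS : Pairwise (Disjoint on S)) {p : ℝ} (hp : 0 < p)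
    (h : ℕ → Ω → ℝ≥0∞) (ω : Ω) :
    (∑' k, (S k).indicator (h k) ω) ^ p = ∑' k, (S k).indicator (fun x => h k x ^ p) ω := by
  by_cases hω : ∃ i, ω ∈ S i
  · obtain ⟨i, hi⟩ := hω
    rw [tsum_indicator_eq_of_mem hS hi, tsum_indicator_eq_of_mem hS hi]
  · push Not at hω
    simp [indicator_of_notMem (hω _), hp]

theorem tsum_rpow_ne_top_of_tsum_ne_top {b : ℕ → ℝ≥0∞} (hb : ∑' k, b k ≠ ∞) {p : ℝ}
    (hp : 1 ≤ p) : ∑' k, b k ^ p ≠ ∞ := by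
  have hp1 : 0 ≤ p - 1 := sub_nonneg.2 hp
  refine ne_top_of_le_ne_top (mul_ne_top hb (rpow_ne_top_of_nonneg hp1 hb)) ?_
  calc ∑' k, b k ^ p = ∑' k, b k * b k ^ (p - 1) := by
        refine tsum_congr fun k => ?_
        nth_rewrite 1 [show p = 1 + (p - 1) by ring]
        rw [rpow_add_of_nonneg _ _ zero_le_one hp1, rpow_one]
    _ ≤ ∑' k, b k * (∑' k, b k) ^ (p - 1) := by
        gcongr with k
        exact ENNReal.le_tsum k
    _ = (∑' k, b k) * (∑' k, b k) ^ (p - 1) := ENNReal.tsum_mul_right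

def lastVisit (D : ℕ → Set Ω) (m : ℕ) : Set Ω := D m \ ⋃ l > m, D l

variable {D : ℕ → Set Ω}

theorem pairwise_disjoint_lastVisit : Pairwise (Disjoint on lastVisit D) := by
  intro m n hmn
  rw [Function.onFun, Set.disjoint_left]
  rintro ω ⟨hm, hm'⟩ ⟨hn, hn'⟩
  rcases hmn.lt_or_gt with h | h
  · exact hm' (mem_iUnion₂.2 ⟨n, h, hn⟩)
  · exact hn' (mem_iUnion₂.2 ⟨m, h, hm⟩)

theorem exists_mem_lastVisit {ω : Ω} {k : ℕ} (hk : ω ∈ D k) (hω : ω ∉ limsup D atTop) :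
    ∃ m, k ≤ m ∧ ω ∈ lastVisit D m := by
  classical
  rw [mem_limsup_iff_frequently_mem, not_frequently, eventually_atTop] at hω
  obtain ⟨N, hN⟩ := hω
  have hkN : k ≤ N := by
    by_contra! h
    exact hN k h.le hk
  refine ⟨Nat.findGreatest (ω ∈ D ·) N, Nat.le_findGreatest hkN hk,
    Nat.findGreatest_spec (P := (ω ∈ D ·)) hkN hk, fun hω => ?_⟩
  obtain ⟨l, hl, hlD⟩ := mem_iUnion₂.1 hω
  rcases le_or_gt l N with hlN | hlN
  · exact Nat.findGreatest_is_greatest hl hlN hlD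
  · exact hN l hlN.le hlD

variable {X : Type*} [NormedAddCommGroup X]

def lagNorm (D : ℕ → Set Ω) (g : ℕ → Ω → X) (k : ℕ) (ω : Ω) : ℝ≥0∞ :=
  ∑' j, (lastVisit D (k + j)).indicator (fun x => ‖g j x‖ₑ) ω

theorem enorm_le_tsum_lagNorm {g : ℕ → Ω → X} {ω : Ω} {s : X}
    (hs : HasSum (fun j => g j ω) s) (hsupp : ∀ j, g j ω ≠ 0 → ∃ k ≥ j, ω ∈ D k)
    (hlimsup : ω ∈ limsup D atTop → ∀ j, g j ω = 0) :
    ‖s‖ₑ ≤ ∑' k, lagNorm D g k ω := by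
  by_cases hω : ω ∈ limsup D atTop
  · have : s = 0 := hs.unique (by simp [hlimsup hω, hasSum_zero])
    simp [this]
  calc ‖s‖ₑ ≤ ∑' j, ‖g j ω‖ₑ := hs.enorm_le_of_bounded ENNReal.summable.hasSum fun _ => le_rfl
    _ = ∑' j, ∑' k, (lastVisit D (k + j)).indicator (fun x => ‖g j x‖ₑ) ω := by
        refine tsum_congr fun j => ?_
        by_cases hj : g j ω = 0
        · classical
          simp [indicator_apply, hj]
        obtain ⟨k, hjk, hk⟩ := hsupp j hj
        obtain ⟨m, hkm, hm⟩ := exists_mem_lastVisit hk hω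
        rw [← Nat.sub_add_cancel (hjk.trans hkm)] at hm
        exact (tsum_indicator_eq_of_mem
          (pairwise_disjoint_lastVisit.comp_of_injective (add_left_injective j)) hm
          fun _ x => ‖g j x‖ₑ).symm
    _ = ∑' k, lagNorm D g k ω := ENNReal.tsum_comm

variable [MeasurableSpace Ω] {μ : Measure Ω}

theorem eLpNorm'_tsum_le {v : ℕ → Ω → ℝ≥0∞} (hv : ∀ k, AEMeasurable (v k) μ) {p : ℝ}
    (hp : 1 ≤ p) : eLpNorm' (fun ω => ∑' k, v k ω) p μ ≤ ∑' k, eLpNorm' (v k) p μ := by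
  have hp0 : 0 < p := zero_lt_one.trans_le hp
  have h_lim : Tendsto (fun n => eLpNorm' (∑ k ∈ Finset.range n, v k) p μ) atTop
      (𝓝 (eLpNorm' (fun ω => ∑' k, v k ω) p μ)) := by
    simp only [eLpNorm', enorm_eq_self, Finset.sum_apply]
    refine (lintegral_tendsto_of_tendsto_of_monotone
      (fun n => (Finset.aemeasurable_fun_sum _ fun k _ => hv k).pow_const p)
      (ae_of_all _ fun ω m n hmn => ?_)
      (ae_of_all _ fun ω => (ENNReal.tendsto_nat_tsum _).ennrpow_const p)).ennrpow_const (1 / p)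
    exact rpow_le_rpow (Finset.sum_le_sum_of_subset (Finset.range_subset_range.2 hmn)) hp0.le
  refine le_of_tendsto' h_lim fun n => ?_
  exact (eLpNorm'_sum_le (fun k _ => (hv k).aestronglyMeasurable) hp).trans
    (ENNReal.sum_le_tsum _)

theorem measurableSet_lastVisit (hD : ∀ k, MeasurableSet (D k)) (m : ℕ) :
    MeasurableSet (lastVisit D m) :=
  (hD m).diff (.iUnion fun l => .iUnion fun _ => hD l)

theorem aemeasurable_lagNorm {g : ℕ → Ω → X} (hg : ∀ j, AEStronglyMeasurable (g j) μ)
    (hD : ∀ k, MeasurableSet (D k)) (k : ℕ) : AEMeasurable (lagNorm D g k) μ :=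
  AEMeasurable.tsum fun j => (hg j).enorm.indicator (measurableSet_lastVisit hD _)

theorem ae_eq_zero_of_mem_limsup {g : Ω → X} (hg : AEStronglyMeasurable g μ)
    (hD : ∀ k, MeasurableSet (D k)) {p : ℝ} (hp : 0 < p) {j : ℕ} {c : ℕ → ℝ≥0∞}
    (hc : ∑' k, c k ≠ ∞) (hsmall : ∀ k, ∫⁻ ω in D (k + j), ‖g ω‖ₑ ^ p ∂μ ≤ c k) :
    ∀ᵐ ω ∂μ, ω ∈ limsup D atTop → g ω = 0 := by
  have hν : μ.withDensity (fun ω => ‖g ω‖ₑ ^ p) (limsup D atTop) = 0 := by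
    rw [← limsup_nat_add D j]
    refine measure_limsup_atTop_eq_zero (ne_top_of_le_ne_top hc (ENNReal.tsum_le_tsum fun k => ?_))
    rw [withDensity_apply _ (hD _)]
    exact hsmall k
  rw [withDensity_apply_eq_zero' (hg.enorm.pow_const p)] at hν
  filter_upwards [measure_eq_zero_iff_ae_notMem.1 hν] with ω hω hmem
  simpa [hp, hmem] using hω

theorem lintegral_lagNorm_rpow_le {g : ℕ → Ω → X} (hg : ∀ j, AEStronglyMeasurable (g j) μ)
    (hD : ∀ k, MeasurableSet (D k)) {p : ℝ} (hp : 0 < p) (k : ℕ) :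
    ∫⁻ ω, lagNorm D g k ω ^ p ∂μ ≤ ∑' j, ∫⁻ ω in D (k + j), ‖g j ω‖ₑ ^ p ∂μ := by
  have hdisj := pairwise_disjoint_lastVisit (D := D).comp_of_injective (add_right_injective k)
  simp_rw [lagNorm, tsum_indicator_rpow hdisj hp]
  rw [lintegral_tsum fun j => ((hg j).enorm.pow_const p).indicator (measurableSet_lastVisit hD _)]
  refine ENNReal.tsum_le_tsum fun j => ?_
  rw [lintegral_indicator (measurableSet_lastVisit hD _)]
  exact lintegral_mono_set sdiff_subset

theorem eLpNorm'_le_of_hasSum_of_almostDisjoint {p : ℝ} (hp : 1 ≤ p) {g : ℕ → Ω → X}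
    (hg : ∀ j, AEStronglyMeasurable (g j) μ) (hD : ∀ k, MeasurableSet (D k))
    (hsupp : ∀ j, μ (support (g j) \ ⋃ k, ⋃ (_ : j ≤ k), D k) = 0)
    (hlimsup : ∀ j, ∀ᵐ ω ∂μ, ω ∈ limsup D atTop → g j ω = 0) {b : ℕ → ℝ≥0∞}
    (hsmall : ∀ k j, ∫⁻ ω in D (k + j), ‖g j ω‖ₑ ^ p ∂μ ≤ b k ^ p * eLpNorm' (g j) p μ ^ p)
    {f : Ω → X} (hf : ∀ᵐ ω ∂μ, HasSum (fun j => g j ω) (f ω)) :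
    eLpNorm' f p μ ≤ (∑' k, b k) * (∑' j, eLpNorm' (g j) p μ ^ p) ^ (1 / p) := by
  have hp0 : 0 < p := zero_lt_one.trans_le hp
  set T := ∑' j, eLpNorm' (g j) p μ ^ p
  have h_ptwise : ∀ᵐ ω ∂μ, ‖f ω‖ₑ ≤ ‖∑' k, lagNorm D g k ω‖ₑ := by
    have hsupp' := ae_all_iff.2 fun j => measure_eq_zero_iff_ae_notMem.1 (hsupp j)
    filter_upwards [hf, hsupp', ae_all_iff.2 hlimsup] with ω hω hωsupp hωlimsup
    refine enorm_le_tsum_lagNorm hω (fun j hj => ?_) fun hmem j => hωlimsup j hmem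
    simpa [hj] using hωsupp j
  have h_piece (k : ℕ) : eLpNorm' (lagNorm D g k) p μ ≤ b k * T ^ (1 / p) := by
    calc eLpNorm' (lagNorm D g k) p μ = (∫⁻ ω, lagNorm D g k ω ^ p ∂μ) ^ (1 / p) := by
          simp only [eLpNorm', enorm_eq_self]
      _ ≤ (∑' j, b k ^ p * eLpNorm' (g j) p μ ^ p) ^ (1 / p) := by
          gcongr
          exact (lintegral_lagNorm_rpow_le hg hD hp0 k).trans
            (ENNReal.tsum_le_tsum fun j => hsmall k j)
      _ = b k * T ^ (1 / p) := by
          rw [ENNReal.tsum_mul_left, mul_rpow_of_nonneg _ _ (by positivity), one_div,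
            rpow_rpow_inv hp0.ne']
  calc eLpNorm' f p μ ≤ eLpNorm' (fun ω => ∑' k, lagNorm D g k ω) p μ :=
        eLpNorm'_mono_enorm_ae hp0.le h_ptwise
    _ ≤ ∑' k, eLpNorm' (lagNorm D g k) p μ := eLpNorm'_tsum_le (aemeasurable_lagNorm hg hD) hp
    _ ≤ ∑' k, b k * T ^ (1 / p) := ENNReal.tsum_le_tsum h_piece
    _ = (∑' k, b k) * T ^ (1 / p) := ENNReal.tsum_mul_right

end AlmostDisjoint

open MeasureTheory ENNReal in
theorem statement_10_general {Ω : Type*} [m0 : MeasurableSpace Ω] (P : Measure Ω)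
    (X : Type*) [NormedAddCommGroup X]
    (p : ℝ) (hp : 1 ≤ p)
    (g : ℕ → Ω → X) (hgmeas : ∀ j, AEStronglyMeasurable (g j) P)
    (a : ℕ → ℝ) (ha : Summable fun k => |a k|)
    (D : ℕ → Set Ω) (hDmeas : ∀ k, MeasurableSet (D k))
    (hsupp : ∀ j, P (Function.support (g j) \ ⋃ k, ⋃ (_ : j ≤ k), D k) = 0)
    (hsmall : ∀ k j, (∫⁻ ω in D (k + j), (‖g j ω‖₊ : ℝ≥0∞) ^ p ∂P) ≤
      ENNReal.ofReal (|a k| ^ p) * eLpNorm (g j) (ENNReal.ofReal p) P ^ p)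
    (f : Ω → X) (hf : ∀ᵐ ω ∂P, HasSum (fun j => g j ω) (f ω)) :
    eLpNorm f (ENNReal.ofReal p) P ≤
      ENNReal.ofReal (∑' k, |a k|) *
        (∑' j, eLpNorm (g j) (ENNReal.ofReal p) P ^ p) ^ (1 / p) := by
  have hp0 : 0 < p := zero_lt_one.trans_le hp
  simp only [eLpNorm_eq_eLpNorm' (ofReal_ne_zero_iff.2 hp0) ofReal_ne_top,
    toReal_ofReal hp0.le] at hsmall ⊢
  simp only [← ofReal_rpow_of_nonneg (abs_nonneg _) hp0.le] at hsmall
  rw [ofReal_tsum_of_nonneg (fun k => abs_nonneg _) ha]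
  have hb : ∑' k, ENNReal.ofReal |a k| ≠ ∞ := by
    rw [← ofReal_tsum_of_nonneg (fun k => abs_nonneg _) ha]
    exact ofReal_ne_top
  -- Borel–Cantelli below needs `∑ k, |a k|^p ‖g j‖_p^p < ∞`; when it fails, the bound is `∞`.
  by_cases htriv : ∑' k, ENNReal.ofReal |a k| ≠ 0 ∧ ∑' j, eLpNorm' (g j) p P ^ p = ∞
  · simp [htriv.2, hp0, mul_top htriv.1]
  have hc (j : ℕ) : ∑' k, ENNReal.ofReal |a k| ^ p * eLpNorm' (g j) p P ^ p ≠ ∞ := by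
    rw [ENNReal.tsum_mul_right]
    rcases not_and_or.1 htriv with hzero | hT
    · rw [not_not, ENNReal.tsum_eq_zero] at hzero
      simp [hzero, hp0]
    · exact mul_ne_top (tsum_rpow_ne_top_of_tsum_ne_top hb hp)
        (ne_top_of_le_ne_top hT (ENNReal.le_tsum j))
  exact eLpNorm'_le_of_hasSum_of_almostDisjoint hp hgmeas hDmeas hsupp
    (fun j => ae_eq_zero_of_mem_limsup (hgmeas j) hDmeas hp0 (hc j) fun k => hsmall k j)
    hsmall hf

open MeasureTheory ENNReal in
/-- almost disjointly supported sequences, Lemma `estDD`. -/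
theorem statement_10 {Ω : Type*} [m0 : MeasurableSpace Ω] (P : Measure Ω)
    [IsProbabilityMeasure P]
    (X : Type*) [NormedAddCommGroup X]
    (p : ℝ) (hp : 1 ≤ p)
    (g : ℕ → Ω → X) (hgmeas : ∀ j, AEStronglyMeasurable (g j) P)
    (a : ℕ → ℝ) (ha : Summable fun k => |a k|)
    (D : ℕ → Set Ω) (hDmeas : ∀ k, MeasurableSet (D k))
    (hsupp : ∀ j, P (Function.support (g j) \ ⋃ k, ⋃ (_ : j ≤ k), D k) = 0)
    (hsmall : ∀ k j, (∫⁻ ω in D (k + j), (‖g j ω‖₊ : ℝ≥0∞) ^ p ∂P) ≤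
      ENNReal.ofReal (|a k| ^ p) * eLpNorm (g j) (ENNReal.ofReal p) P ^ p)
    (f : Ω → X) (hf : ∀ᵐ ω ∂P, HasSum (fun j => g j ω) (f ω)) :
    eLpNorm f (ENNReal.ofReal p) P ≤
      ENNReal.ofReal (∑' k, |a k|) *
        (∑' j, eLpNorm (g j) (ENNReal.ofReal p) P ^ p) ^ (1 / p) :=
  statement_10_general (m0 := m0) P X p hp g hgmeas a ha D hDmeas hsupp hsmall f hf
end
end

section
/- Let 1 < p ≤ 2, let (Ω, F, (F_n), P) be a filtered atomic probability space with associated collection ℬ, and let M be a scalar martingale type p constant for (Ω, F, (F_n), P). Let R ⊆ ℬ, let A ∈ F, and let (x_{B̃})_{B̃ ∈ G_1(R, A)} be a family of vectors of a Banach space X for which the series ∑_{B̃ ∈ G_1(R, A)} x_{B̃} P(B̃) 1_{star(B)} converges almost everywhere. Then ‖∑_{B̃ ∈ G_1(R, A)} x_{B̃} P(B̃) 1_{star(B)}‖_{L^p(Ω;X)} ≤ 2^{1 − 1/p} (1 + M^p)^{1/p} (∑_{B̃ ∈ G_1(R, A)} ‖x_{B̃}‖^p ‖φ_B‖_{L^p(Ω)}^p)^{1/p},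 where φ_B = P(B̃)·1_{star(B)} − P(star(B))·1_{B̃}. -/
open MeasureTheory ENNReal

noncomputable section

/-!
Write `P(B̃) 1_{star B} = φ_B + P(star B) 1_{B̃}`. Pointwise, `‖∑ x_B P(B̃) 1_{star B}‖ ≤ g + w`
with the scalar functions `g = ∑ ‖x_B‖ φ_B` and `w = ∑ ‖x_B‖ P(star B) 1_{B̃}`; put
`S = ∑ ‖x_B‖^p ‖φ_B‖_p^p`.

For `B ∈ 𝒜_n`, `φ_B` is `F_{n+1}`-measurable and has mean zero on every atom of `𝒜_n`, so it is
its own `(n+1)`-st martingale difference. The members of `G_1(R, A)` are pairwise disjoint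
(the sets `B̃` form a nested family), so the `φ_B` of one level live on distinct atoms and the
martingale differences of `g` have disjointly supported summands: the martingale type inequality
gives `‖g‖_p ≤ M S^{1/p}`. The `B̃` being disjoint and `|P(star B) 1_{B̃}| ≤ |φ_B|`, also
`‖w‖_p ≤ S^{1/p}`. Finally `M + 1 ≤ 2^{1-1/p} (1 + M^p)^{1/p}` by convexity of `t ↦ t^p`, and
Fatou's lemma passes from finite subfamilies to the whole series.
-/

open Filter

namespace Paper

section LpSums

variable {Ω E : Type*} [NormedAddCommGroup E]

theorem enorm_sum_rpow_of_pairwise_disjoint_support {ι : Type*} {s : Finset ι} {g : ι → Ω → E}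
    (hd : (s : Set ι).PairwiseDisjoint fun i => Function.support (g i)) {p : ℝ}
    (hp : 0 < p) (ω : Ω) :
    ‖∑ i ∈ s, g i ω‖ₑ ^ p = ∑ i ∈ s, ‖g i ω‖ₑ ^ p := by
  by_cases h : ∃ i ∈ s, g i ω ≠ 0
  · obtain ⟨i, hi, hne⟩ := h
    have hzero : ∀ j ∈ s, j ≠ i → g j ω = 0 := fun j hj hji =>
      Function.notMem_support.mp (Set.disjoint_left.mp (hd hi hj hji.symm) hne)
    rw [Finset.sum_eq_single_of_mem i hi hzero,
      Finset.sum_eq_single_of_mem i hi fun j hj hji => by simp [hzero j hj hji, hp]]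
  · push Not at h
    rw [Finset.sum_eq_zero h, Finset.sum_eq_zero fun i hi => by simp [h i hi, hp]]
    simp [hp]

variable [MeasurableSpace Ω] {μ : Measure Ω}

theorem eLpNorm_ofReal_rpow_eq_lintegral {p : ℝ} (hp : 0 < p) (f : Ω → E) :
    eLpNorm f (ENNReal.ofReal p) μ ^ p = ∫⁻ ω, ‖f ω‖ₑ ^ p ∂μ := by
  rw [eLpNorm_eq_lintegral_rpow_enorm_toReal (by simpa using hp) ENNReal.ofReal_ne_top,
    ENNReal.toReal_ofReal hp.le, ← ENNReal.rpow_mul, one_div_mul_cancel hp.ne', ENNReal.rpow_one]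

theorem eLpNorm_sum_rpow_of_pairwise_disjoint_support {ι : Type*} {s : Finset ι} {g : ι → Ω → E}
    (hg : ∀ i ∈ s, AEStronglyMeasurable (g i) μ)
    (hd : (s : Set ι).PairwiseDisjoint fun i => Function.support (g i)) {p : ℝ}
    (hp : 0 < p) :
    eLpNorm (∑ i ∈ s, g i) (ENNReal.ofReal p) μ ^ p =
      ∑ i ∈ s, eLpNorm (g i) (ENNReal.ofReal p) μ ^ p := by
  simp only [eLpNorm_ofReal_rpow_eq_lintegral hp, Finset.sum_apply,
    enorm_sum_rpow_of_pairwise_disjoint_support hd hp]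
  exact lintegral_finsetSum' s fun i hi => (hg i hi).enorm.pow_const p

theorem eLpNorm_le_of_hasSum_ae {ι : Type*} [Countable ι] {u : ι → Ω → E} {f : Ω → E}
    {q C : ℝ≥0∞} (hu : ∀ i, AEStronglyMeasurable (u i) μ)
    (hf : ∀ᵐ ω ∂μ, HasSum (fun i => u i ω) (f ω))
    (hC : ∀ s : Finset ι, eLpNorm (∑ i ∈ s, u i) q μ ≤ C) :
    eLpNorm f q μ ≤ C := by
  obtain ⟨Λ, hΛ⟩ := exists_seq_tendsto (atTop : Filter (Finset ι))
  have hlim : ∀ᵐ ω ∂μ, Tendsto (fun k => (∑ i ∈ Λ k, u i) ω) atTop (nhds (f ω)) := by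
    filter_upwards [hf] with ω hω
    simpa only [Finset.sum_apply, Function.comp_def] using hω.comp hΛ
  calc eLpNorm f q μ ≤ atTop.liminf fun k => eLpNorm (∑ i ∈ Λ k, u i) q μ :=
        Lp.eLpNorm_lim_le_liminf_eLpNorm
          (fun k => Finset.aestronglyMeasurable_sum _ fun i _ => hu i) f hlim
    _ ≤ C := liminf_le_of_le (by isBoundedDefault) fun b hb => hb.exists.elim fun k hk =>
        hk.trans (hC _)

end LpSums

theorem add_le_two_rpow_mul_rpow_add_rpow {a b p : ℝ} (ha : 0 ≤ a) (hb : 0 ≤ b) (hp : 1 ≤ p) :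
    a + b ≤ (2 : ℝ) ^ (1 - 1 / p) * (a ^ p + b ^ p) ^ (1 / p) := by
  have hp0 : 0 < p := one_pos.trans_le hp
  have hab : 0 ≤ a + b := add_nonneg ha hb
  have hpow : (a + b) ^ p ≤ 2 ^ (p - 1) * (a ^ p + b ^ p) := by
    lift a to NNReal using ha
    lift b to NNReal using hb
    exact_mod_cast NNReal.rpow_add_le_mul_rpow_add_rpow a b hp
  calc a + b = ((a + b) ^ p) ^ (1 / p) := by
        rw [← Real.rpow_mul hab, mul_one_div_cancel hp0.ne', Real.rpow_one]
    _ ≤ (2 ^ (p - 1) * (a ^ p + b ^ p)) ^ (1 / p) := by gcongr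
    _ = 2 ^ (1 - 1 / p) * (a ^ p + b ^ p) ^ (1 / p) := by
        rw [Real.mul_rpow (by positivity) (by positivity), ← Real.rpow_mul zero_le_two]
        congr 2
        field_simp

section HaarPair

variable {Ω : Type*} [MeasurableSpace Ω] {P : Measure Ω} {S T U : Set Ω}

def haarPair (P : Measure Ω) (S T : Set Ω) : Ω → ℝ := fun ω =>
  (P T).toReal * S.indicator (fun _ => (1 : ℝ)) ω - (P S).toReal * T.indicator (fun _ => (1 : ℝ)) ω

theorem haarPair_eq_indicator_sub :
    haarPair P S T = S.indicator (fun _ => (P T).toReal) - T.indicator (fun _ => (P S).toReal) := by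
  funext ω
  by_cases hS : ω ∈ S <;> by_cases hT : ω ∈ T <;> simp [haarPair, hS, hT]

theorem haarPair_add_mul_indicator (ω : Ω) :
    haarPair P S T ω + (P S).toReal * T.indicator (fun _ => (1 : ℝ)) ω =
      (P T).toReal * S.indicator (fun _ => (1 : ℝ)) ω := by
  simp only [haarPair]
  ring

theorem memLp_haarPair [IsFiniteMeasure P] (hS : MeasurableSet S) (hT : MeasurableSet T)
    (q : ℝ≥0∞) : MemLp (haarPair P S T) q P := by
  rw [haarPair_eq_indicator_sub]
  exact (memLp_indicator_const q hS _ (Or.inr (measure_ne_top P _))).sub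
    (memLp_indicator_const q hT _ (Or.inr (measure_ne_top P _)))

theorem integrable_haarPair [IsFiniteMeasure P] (hS : MeasurableSet S) (hT : MeasurableSet T) :
    Integrable (haarPair P S T) P :=
  memLp_one_iff_integrable.mp (memLp_haarPair hS hT 1)

theorem support_haarPair_subset (hSU : S ⊆ U) (hTU : T ⊆ U) :
    Function.support (haarPair P S T) ⊆ U := by
  intro ω hω
  by_contra hωU
  have hωS : ω ∉ S := fun h => hωU (hSU h)
  have hωT : ω ∉ T := fun h => hωU (hTU h)
  exact hω (by simp [haarPair, hωS, hωT])

theorem setIntegral_haarPair_eq_zero [IsFiniteMeasure P] (hS : MeasurableSet S)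
    (hT : MeasurableSet T) (hSU : S ⊆ U) (hTU : T ⊆ U) {s : Set Ω} (hU : U ⊆ s ∨ Disjoint U s) :
    ∫ ω in s, haarPair P S T ω ∂P = 0 := by
  have hint : ∫ ω in s, haarPair P S T ω ∂P =
      (P T).toReal * (P (S ∩ s)).toReal - (P S).toReal * (P (T ∩ s)).toReal := by
    rw [haarPair_eq_indicator_sub]
    simp only [Pi.sub_apply]
    rw [integral_sub ((integrable_const _).indicator hS) ((integrable_const _).indicator hT),
      integral_indicator_const _ hS, integral_indicator_const _ hT,
      measureReal_restrict_apply hS, measureReal_restrict_apply hT]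
    simp [mul_comm, measureReal_def]
  rcases hU with hU | hU
  · rw [hint, Set.inter_eq_self_of_subset_left (hSU.trans hU),
      Set.inter_eq_self_of_subset_left (hTU.trans hU)]
    ring
  · rw [hint, (hU.mono_left hSU).inter_eq, (hU.mono_left hTU).inter_eq]
    simp

theorem integral_haarPair_eq_zero [IsFiniteMeasure P] (hS : MeasurableSet S)
    (hT : MeasurableSet T) : ∫ ω, haarPair P S T ω ∂P = 0 := by
  simpa using setIntegral_haarPair_eq_zero hS hT (Set.subset_univ S) (Set.subset_univ T)
    (Or.inl subset_rfl)

theorem norm_mul_indicator_le_norm_haarPair (hST : Disjoint S T) (ω : Ω) :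
    ‖(P S).toReal * T.indicator (fun _ => (1 : ℝ)) ω‖ ≤ ‖haarPair P S T ω‖ := by
  by_cases hT : ω ∈ T
  · simp [haarPair, hT, Set.disjoint_right.mp hST hT]
  · simp [hT]

end HaarPair

section Nested

variable {Ω : Type*} {R R' : Set (Set Ω)} {A : Set Ω}

theorem Nested.mono (hR : Nested R) (h : R' ⊆ R) : Nested R' :=
  fun B hB C hC => hR B (h hB) C (h hC)

theorem pairwiseDisjoint_G1_of_nested (h : Nested (G1 R A)) : (G1 R A).PairwiseDisjoint id := by
  intro B hB C hC hne
  by_contra hBC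
  rcases h B hB C hC (Set.not_disjoint_iff_nonempty_inter.mp hBC) with hsub | hsub
  · exact hne (hB.2.2 C hC.1 hC.2.1 hsub)
  · exact hne (hC.2.2 B hB.1 hB.2.1 hsub).symm

end Nested

namespace FilteredAtomic

variable {Ω : Type*} [m0 : MeasurableSpace Ω] {P : Measure Ω} (F : FilteredAtomic Ω P)
  {n m : ℕ} {A B C : Set Ω}

theorem filt_le (n : ℕ) : F.filt n ≤ m0 := by
  conv_rhs => rw [F.gen]
  exact le_iSup (fun k => MeasurableSpace.generateFrom (F.part k : Set (Set Ω))) n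

theorem measurableSet_filt_of_mem_part (hA : A ∈ F.part n) : MeasurableSet[F.filt n] A :=
  MeasurableSpace.measurableSet_generateFrom (Finset.mem_coe.mpr hA)

theorem exists_mem_part (n : ℕ) (ω : Ω) : ∃ A ∈ F.part n, ω ∈ A := by
  have hω : ω ∈ ⋃₀ (F.part n : Set (Set Ω)) := by rw [F.cover]; trivial
  obtain ⟨A, hA, hωA⟩ := hω
  exact ⟨A, hA, hωA⟩

theorem eq_of_mem_part_of_mem (hA : A ∈ F.part n) (hB : B ∈ F.part n) {ω : Ω} (hωA : ω ∈ A)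
    (hωB : ω ∈ B) : A = B := by
  by_contra hAB
  exact Set.disjoint_left.mp (F.disj n hA hB hAB) hωA hωB

theorem subset_of_mem_part_of_le (hA : A ∈ F.part n) (hC : C ∈ F.part m) (hnm : n ≤ m)
    {ω : Ω} (hωA : ω ∈ A) (hωC : ω ∈ C) : C ⊆ A := by
  obtain ⟨k, rfl⟩ := Nat.exists_eq_add_of_le hnm
  clear hnm
  induction k generalizing C with
  | zero => exact (F.eq_of_mem_part_of_mem hA hC hωA hωC).symm ▸ subset_rfl
  | succ k ih =>
    obtain ⟨D, hD, hCD⟩ := F.refined (n + k) C hC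
    exact hCD.trans (ih (hCD hωC) hD)

theorem eq_sUnion_children (hA : A ∈ F.part n) :
    A = ⋃₀ {C | C ∈ F.part (n + 1) ∧ C ⊆ A} := by
  refine subset_antisymm (fun ω hωA => ?_) (Set.sUnion_subset fun C hC => hC.2)
  obtain ⟨C, hC, hωC⟩ := F.exists_mem_part (n + 1) ω
  exact ⟨C, ⟨hC, F.subset_of_mem_part_of_le hA hC n.le_succ hωA hωC⟩, hωC⟩

theorem filt_mono : Monotone F.filt := by
  refine monotone_nat_of_le_succ fun n => MeasurableSpace.generateFrom_le fun A hA => ?_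
  rw [F.eq_sUnion_children (Finset.mem_coe.mp hA)]
  exact MeasurableSet.sUnion (((F.part (n + 1)).finite_toSet.subset fun C hC => hC.1).countable)
    fun C hC => F.measurableSet_filt_of_mem_part hC.1

theorem subset_or_disjoint_of_measurableSet_filt {s : Set Ω} (hs : MeasurableSet[F.filt n] s)
    (hA : A ∈ F.part n) : A ⊆ s ∨ Disjoint A s := by
  induction s, hs using MeasurableSpace.generateFrom_induction with
  | hC t ht =>
    rcases eq_or_ne A t with rfl | h
    · exact Or.inl subset_rfl
    · exact Or.inr (F.disj n hA ht h)
  | empty => exact Or.inr (Set.disjoint_empty A)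
  | compl t _ ht =>
    exact ht.symm.imp Set.subset_compl_iff_disjoint_right.mpr
      Set.disjoint_compl_right_iff_subset.mpr
  | iUnion t _ ht =>
    by_cases hex : ∃ i, A ⊆ t i
    · obtain ⟨i, hi⟩ := hex
      exact Or.inl (hi.trans (Set.subset_iUnion t i))
    · push Not at hex
      exact Or.inr (Set.disjoint_iUnion_right.mpr fun i => (ht i).resolve_left (hex i))

theorem mdiff_sum_smul {X : Type*} [NormedAddCommGroup X] [NormedSpace ℝ X] [CompleteSpace X]
    {ι : Type*} (s : Finset ι) (c : ι → ℝ) {g : ι → Ω → X} (hg : ∀ i ∈ s, Integrable (g i) P)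
    (m : ℕ) : F.mdiff (∑ i ∈ s, c i • g i) m =ᵐ[P] ∑ i ∈ s, c i • F.mdiff (g i) m := by
  have hce : ∀ k, P[∑ i ∈ s, c i • g i | F.filt k] =ᵐ[P] ∑ i ∈ s, c i • P[g i | F.filt k] :=
    fun k => (condExp_finsetSum (fun i hi => (hg i hi).smul (c i)) _).trans
      (eventuallyEq_sum fun i _ => condExp_smul (c i) (g i) _)
  filter_upwards [hce (m + 1), hce m] with ω h1 h2
  simp only [mdiff, Pi.sub_apply, h1, h2, Finset.sum_apply, Pi.smul_apply, smul_sub,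
    Finset.sum_sub_distrib]

theorem measurableSet_star (hB : B ∈ F.part n) : MeasurableSet (F.star n B) :=
  F.meas (n + 1) _ (F.star_mem n B hB)

theorem measurableSet_tilde (hB : B ∈ F.part n) : MeasurableSet (B \ F.star n B) :=
  (F.meas n B hB).diff (F.measurableSet_star hB)

/-- The paper's `φ_B = P(B̃) 1_{star B} - P(star B) 1_{B̃}`. -/
def phi (n : ℕ) (B : Set Ω) : Ω → ℝ :=
  haarPair P (F.star n B) (B \ F.star n B)

/-- `ℬ` without the positivity requirement `0 < P(B̃)`. -/
def tildes : Set (Set Ω) :=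
  {S | ∃ n, ∃ B ∈ F.part n, S = B \ F.star n B}

theorem countable_tildes : F.tildes.Countable := by
  refine (Set.countable_iUnion fun n =>
    ((F.part n).finite_toSet.image fun B => B \ F.star n B).countable).mono ?_
  rintro S ⟨n, B, hB, rfl⟩
  exact Set.mem_iUnion.mpr ⟨n, B, hB, rfl⟩

theorem tilde_subset_tilde_of_lt (hA : A ∈ F.part n) (hB : B ∈ F.part m) (hnm : n < m) {ω : Ω}
    (hωA : ω ∈ A \ F.star n A) (hωB : ω ∈ B \ F.star m B) :
    B \ F.star m B ⊆ A \ F.star n A := by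
  obtain ⟨C, hC, hωC⟩ := F.exists_mem_part (n + 1) ω
  have hBA : B ⊆ A := F.subset_of_mem_part_of_le hA hB hnm.le hωA.1 hωB.1
  have hBC : B ⊆ C := F.subset_of_mem_part_of_le hC hB hnm hωC hωB.1
  have hCstar : Disjoint C (F.star n A) :=
    F.disj (n + 1) hC (F.star_mem n A hA) fun h => hωA.2 (h ▸ hωC)
  exact fun y hy => ⟨hBA hy.1, Set.disjoint_left.mp hCstar (hBC hy.1)⟩

theorem nested_tildes : Nested F.tildes := by
  rintro _ ⟨n, A, hA, rfl⟩ _ ⟨m, B, hB, rfl⟩ ⟨ω, hωA, hωB⟩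
  rcases lt_trichotomy n m with h | rfl | h
  · exact Or.inr (F.tilde_subset_tilde_of_lt hA hB h hωA hωB)
  · exact Or.inl (F.eq_of_mem_part_of_mem hA hB hωA.1 hωB.1 ▸ subset_rfl)
  · exact Or.inl (F.tilde_subset_tilde_of_lt hB hA h hωB hωA)

section Phi

variable [IsFiniteMeasure P]

theorem integrable_phi (hB : B ∈ F.part n) : Integrable (F.phi n B) P :=
  integrable_haarPair (F.measurableSet_star hB) (F.measurableSet_tilde hB)

theorem condExp_phi_self (hB : B ∈ F.part n) : P[F.phi n B | F.filt n] =ᵐ[P] 0 := by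
  refine (ae_eq_condExp_of_forall_setIntegral_eq (F.filt_le n) (F.integrable_phi hB)
    (fun s _ _ => integrableOn_zero) (fun s hs _ => ?_)
    aestronglyMeasurable_const).symm
  rw [phi, setIntegral_haarPair_eq_zero (F.measurableSet_star hB) (F.measurableSet_tilde hB)
    (F.star_sub n B hB) Set.sdiff_subset (F.subset_or_disjoint_of_measurableSet_filt hs hB)]
  simp

theorem condExp_phi_of_le (hB : B ∈ F.part n) (hmn : m ≤ n) :
    P[F.phi n B | F.filt m] =ᵐ[P] 0 :=
  calc P[F.phi n B | F.filt m]
      =ᵐ[P] P[P[F.phi n B | F.filt n] | F.filt m] :=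
        (condExp_condExp_of_le (F.filt_mono hmn) (F.filt_le n)).symm
    _ =ᵐ[P] P[(0 : Ω → ℝ) | F.filt m] := condExp_congr_ae (F.condExp_phi_self hB)
    _ = 0 := condExp_zero

theorem condExp_phi_of_lt (hB : B ∈ F.part n) (hnm : n < m) :
    P[F.phi n B | F.filt m] = F.phi n B := by
  have hstar : MeasurableSet[F.filt m] (F.star n B) :=
    F.filt_mono hnm _ (F.measurableSet_filt_of_mem_part (F.star_mem n B hB))
  have hB' : MeasurableSet[F.filt m] B :=
    F.filt_mono hnm.le _ (F.measurableSet_filt_of_mem_part hB)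
  refine condExp_of_stronglyMeasurable (F.filt_le m) ?_ (F.integrable_phi hB)
  rw [phi, haarPair_eq_indicator_sub]
  exact (stronglyMeasurable_const.indicator hstar).sub
    (stronglyMeasurable_const.indicator (hB'.diff hstar))

theorem mdiff_phi (hB : B ∈ F.part n) (m : ℕ) :
    F.mdiff (F.phi n B) m =ᵐ[P] if m = n then F.phi n B else 0 := by
  unfold mdiff
  rcases lt_trichotomy m n with h | rfl | h
  · filter_upwards [F.condExp_phi_of_le hB h, F.condExp_phi_of_le hB h.le] with ω h1 h2
    simp [h1, h2, h.ne]
  · filter_upwards [F.condExp_phi_of_le hB le_rfl] with ω h1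
    simp [F.condExp_phi_of_lt hB m.lt_succ_self, h1]
  · rw [F.condExp_phi_of_lt hB (h.trans m.lt_succ_self),
      F.condExp_phi_of_lt hB h, if_neg h.ne', sub_self]

end Phi

section SingleGeneration

variable {ι : Type*} {lvl : ι → ℕ} {atm : ι → Set Ω} {p : ℝ}

theorem eLpNorm_sum_smul_mul_indicator_le (hatm : ∀ i, atm i ∈ F.part (lvl i)) {b : ι → Set Ω}
    (hb : ∀ i, b i = atm i \ F.star (lvl i) (atm i))
    (hdisj : Pairwise fun i j => Disjoint (b i) (b j)) (s : Finset ι) (c : ι → ℝ) (hp : 0 < p) :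
    eLpNorm (∑ i ∈ s, c i • fun ω =>
        (P (F.star (lvl i) (atm i))).toReal * (b i).indicator (fun _ => (1 : ℝ)) ω)
        (ENNReal.ofReal p) P ≤
      (∑ i ∈ s, ‖c i‖ₑ ^ p * eLpNorm (haarPair P (F.star (lvl i) (atm i)) (b i))
        (ENNReal.ofReal p) P ^ p) ^ (1 / p) := by
  have hbm : ∀ i, MeasurableSet (b i) := fun i => hb i ▸ F.measurableSet_tilde (hatm i)
  have hsupp : ∀ i, Function.support (c i • fun ω =>
      (P (F.star (lvl i) (atm i))).toReal * (b i).indicator (fun _ => (1 : ℝ)) ω) ⊆ b i :=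
    fun i => (Function.support_const_smul_subset _ _).trans
      ((Function.support_mul_subset_right _ _).trans Set.support_indicator_subset)
  rw [one_div, ENNReal.le_rpow_inv_iff hp, eLpNorm_sum_rpow_of_pairwise_disjoint_support
    (fun i _ =>
      ((measurable_const.indicator (hbm i)).const_mul _).aestronglyMeasurable.const_smul _)
    (fun i _ j _ hij => Set.disjoint_of_subset (hsupp i) (hsupp j) (hdisj hij)) hp]
  refine Finset.sum_le_sum fun i _ => ?_
  rw [eLpNorm_const_smul, ENNReal.mul_rpow_of_nonneg _ _ hp.le]
  gcongr
  exact eLpNorm_mono (norm_mul_indicator_le_norm_haarPair (hb i ▸ Set.disjoint_sdiff_right))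

variable [IsFiniteMeasure P]

theorem mdiff_sum_smul_phi (hatm : ∀ i, atm i ∈ F.part (lvl i)) (s : Finset ι)
    (c : ι → ℝ) (m : ℕ) :
    F.mdiff (∑ i ∈ s, c i • F.phi (lvl i) (atm i)) m =ᵐ[P]
      ∑ i ∈ s with lvl i = m, c i • F.phi (lvl i) (atm i) := by
  refine (F.mdiff_sum_smul s c (fun i _ => F.integrable_phi (hatm i)) m).trans ?_
  rw [Finset.sum_filter]
  refine eventuallyEq_sum fun i _ => ?_
  filter_upwards [F.mdiff_phi (hatm i) m] with ω hω
  split_ifs with h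
  · simp only [Pi.smul_apply, hω, if_pos h.symm]
  · simp only [Pi.smul_apply, hω, if_neg (Ne.symm h), Pi.zero_apply, smul_zero]

theorem eLpNorm_mdiff_sum_smul_phi_rpow (hatm : ∀ i, atm i ∈ F.part (lvl i))
    (hinj : Function.Injective fun i => (lvl i, atm i)) (s : Finset ι) (c : ι → ℝ) (hp : 0 < p)
    (m : ℕ) :
    eLpNorm (F.mdiff (∑ i ∈ s, c i • F.phi (lvl i) (atm i)) m) (ENNReal.ofReal p) P ^ p =
      ∑ i ∈ s with lvl i = m,
        ‖c i‖ₑ ^ p * eLpNorm (F.phi (lvl i) (atm i)) (ENNReal.ofReal p) P ^ p := by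
  have hsupp : ∀ i, Function.support (c i • F.phi (lvl i) (atm i)) ⊆ atm i := fun i =>
    (Function.support_const_smul_subset _ _).trans
      (support_haarPair_subset (F.star_sub _ _ (hatm i)) Set.sdiff_subset)
  rw [eLpNorm_congr_ae (F.mdiff_sum_smul_phi hatm s c m),
    eLpNorm_sum_rpow_of_pairwise_disjoint_support
      (fun i _ => ((F.integrable_phi (hatm i)).smul (c i)).aestronglyMeasurable) ?_ hp]
  · refine Finset.sum_congr rfl fun i _ => ?_
    rw [eLpNorm_const_smul, ENNReal.mul_rpow_of_nonneg _ _ hp.le]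
  · intro i hi j hj hij
    have hi' := (Finset.mem_filter.mp hi).2
    have hj' := (Finset.mem_filter.mp hj).2
    have hatm_ne : atm i ≠ atm j := fun h => hij (hinj (Prod.ext (hi'.trans hj'.symm) h))
    refine Set.disjoint_of_subset (hsupp i) (hsupp j) ?_
    exact F.disj m (Finset.mem_coe.mpr (hi' ▸ hatm i)) (Finset.mem_coe.mpr (hj' ▸ hatm j)) hatm_ne

theorem mtBound_sum_smul_phi (hatm : ∀ i, atm i ∈ F.part (lvl i))
    (hinj : Function.Injective fun i => (lvl i, atm i)) (s : Finset ι) (c : ι → ℝ) (hp : 0 < p) :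
    F.mtBound (∑ i ∈ s, c i • F.phi (lvl i) (atm i)) p =
      (∑ i ∈ s, ‖c i‖ₑ ^ p * eLpNorm (F.phi (lvl i) (atm i)) (ENNReal.ofReal p) P ^ p) ^
        (1 / p) := by
  classical
  have hmean : ∫ ω, (∑ i ∈ s, c i • F.phi (lvl i) (atm i)) ω ∂P = 0 := by
    simp only [Finset.sum_apply]
    rw [integral_finsetSum s fun i _ => (F.integrable_phi (hatm i)).smul (c i)]
    refine Finset.sum_eq_zero fun i _ => ?_
    simp only [Pi.smul_apply, phi]
    rw [integral_smul, integral_haarPair_eq_zero (F.measurableSet_star (hatm i))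
      (F.measurableSet_tilde (hatm i)), smul_zero]
  have hlevels : ∑' m, eLpNorm (F.mdiff (∑ i ∈ s, c i • F.phi (lvl i) (atm i)) m)
        (ENNReal.ofReal p) P ^ p =
      ∑ i ∈ s, ‖c i‖ₑ ^ p * eLpNorm (F.phi (lvl i) (atm i)) (ENNReal.ofReal p) P ^ p := by
    simp only [F.eLpNorm_mdiff_sum_smul_phi_rpow hatm hinj s c hp]
    rw [tsum_eq_sum (s := s.image lvl) fun m hm => Finset.sum_eq_zero fun i hi => by
      obtain ⟨his, rfl⟩ := Finset.mem_filter.mp hi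
      exact absurd (Finset.mem_image_of_mem lvl his) hm]
    exact Finset.sum_fiberwise_of_maps_to (fun i hi => Finset.mem_image_of_mem lvl hi) _
  rw [mtBound, hmean, hlevels]
  simp [ENNReal.zero_rpow_of_pos hp]

theorem eLpNorm_sum_smul_indicator_star_le {X : Type*} [NormedAddCommGroup X] [NormedSpace ℝ X]
    {M : ℝ} (hM : ScalarMT F p M) (hp : 1 < p) (hatm : ∀ i, atm i ∈ F.part (lvl i))
    {b : ι → Set Ω} (hb : ∀ i, b i = atm i \ F.star (lvl i) (atm i)) (hb_inj : Function.Injective b)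
    (hdisj : Pairwise fun i j => Disjoint (b i) (b j)) (s : Finset ι) (x : ι → X) :
    eLpNorm (∑ i ∈ s, fun ω =>
        (P (b i)).toReal • (F.star (lvl i) (atm i)).indicator (fun _ => x i) ω)
        (ENNReal.ofReal p) P ≤
      (ENNReal.ofReal M + 1) * (∑ i ∈ s, ‖x i‖ₑ ^ p *
        eLpNorm (haarPair P (F.star (lvl i) (atm i)) (b i)) (ENNReal.ofReal p) P ^ p) ^
          (1 / p) := by
  have hp0 : 0 < p := one_pos.trans hp
  set S := ∑ i ∈ s, ‖x i‖ₑ ^ p *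
    eLpNorm (haarPair P (F.star (lvl i) (atm i)) (b i)) (ENNReal.ofReal p) P ^ p
  set g := ∑ i ∈ s, ‖x i‖ • haarPair P (F.star (lvl i) (atm i)) (b i)
  set w := ∑ i ∈ s, ‖x i‖ • fun ω =>
    (P (F.star (lvl i) (atm i))).toReal * (b i).indicator (fun _ => (1 : ℝ)) ω
  have hpointwise : ∀ ω, ‖(∑ i ∈ s, fun ω =>
      (P (b i)).toReal • (F.star (lvl i) (atm i)).indicator (fun _ => x i) ω) ω‖ ≤ ‖(g + w) ω‖ := by
    intro ω
    rw [Finset.sum_apply]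
    refine (norm_sum_le _ _).trans (le_of_eq_of_le ?_ (le_abs_self _))
    simp only [g, w, Pi.add_apply, Finset.sum_apply, Pi.smul_apply, smul_eq_mul,
      ← Finset.sum_add_distrib, ← mul_add, haarPair_add_mul_indicator]
    refine Finset.sum_congr rfl fun i _ => ?_
    by_cases hω : ω ∈ F.star (lvl i) (atm i) <;> simp [hω, norm_smul, mul_comm]
  have hinj : Function.Injective fun i => (lvl i, atm i) := fun i j h => by
    simp only [Prod.mk.injEq] at h
    exact hb_inj ((hb i).trans (h.1 ▸ h.2 ▸ (hb j).symm))
  have hbm : ∀ i, MeasurableSet (b i) := fun i => hb i ▸ F.measurableSet_tilde (hatm i)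
  have hg_mem : MemLp g (ENNReal.ofReal p) P := memLp_finsetSum' s fun i _ =>
    (memLp_haarPair (F.measurableSet_star (hatm i)) (hbm i) _).const_smul _
  have hg : eLpNorm g (ENNReal.ofReal p) P ≤ ENNReal.ofReal M * S ^ (1 / p) := by
    have hmt := F.mtBound_sum_smul_phi hatm hinj s (fun i => ‖x i‖) hp0
    simp only [phi, enorm_norm, ← hb] at hmt
    exact (hM.2 g hg_mem).trans_eq (by rw [hmt])
  have hw : eLpNorm w (ENNReal.ofReal p) P ≤ S ^ (1 / p) := by
    simpa only [norm_norm, enorm_norm] using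
      F.eLpNorm_sum_smul_mul_indicator_le hatm hb hdisj s (fun i => ‖x i‖) hp0
  have hw_meas : AEStronglyMeasurable w P := Finset.aestronglyMeasurable_sum s fun i _ =>
    ((measurable_const.indicator (hbm i)).const_mul _).aestronglyMeasurable.const_smul _
  calc _ ≤ eLpNorm (g + w) (ENNReal.ofReal p) P := eLpNorm_mono hpointwise
    _ ≤ eLpNorm g (ENNReal.ofReal p) P + eLpNorm w (ENNReal.ofReal p) P :=
        eLpNorm_add_le hg_mem.aestronglyMeasurable hw_meas (ENNReal.one_le_ofReal.mpr hp.le)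
    _ ≤ ENNReal.ofReal M * S ^ (1 / p) + S ^ (1 / p) := add_le_add hg hw
    _ = (ENNReal.ofReal M + 1) * S ^ (1 / p) := by ring

end SingleGeneration

end FilteredAtomic

end Paper

open MeasureTheory ENNReal in
/-- `sel B̃` is an occurrence `(n, B)` with `B ∈ 𝒜_n` and `B̃ = B \ star B`, so that
`F.star (sel B̃).1 (sel B̃).2` is the paper's `star(B)`. -/
theorem statement_13_general {Ω : Type*} [m0 : MeasurableSpace Ω] (P : Measure Ω)
    [IsProbabilityMeasure P] (F : Paper.FilteredAtomic Ω P)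
    (p : ℝ) (hp1 : 1 < p)
    (M : ℝ) (hM : Paper.ScalarMT F p M)
    (R : Set (Set Ω))
    (A : Set Ω)
    (sel : Set Ω → ℕ × Set Ω)
    (hsel : ∀ B ∈ Paper.G1 R A,
      (sel B).2 ∈ F.part (sel B).1 ∧ B = (sel B).2 \ F.star (sel B).1 (sel B).2)
    (X : Type*) [NormedAddCommGroup X] [NormedSpace ℝ X] [CompleteSpace X]
    (x : Set Ω → X) (f : Ω → X)
    (hf : ∀ᵐ ω ∂P, HasSum (fun B : Paper.G1 R A =>
      (P (B : Set Ω)).toReal •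
        Set.indicator (F.star (sel (B : Set Ω)).1 (sel (B : Set Ω)).2)
          (fun _ => x (B : Set Ω)) ω) (f ω)) :
    eLpNorm f (ENNReal.ofReal p) P ≤
      ENNReal.ofReal ((2 : ℝ) ^ (1 - 1 / p) * (1 + M ^ p) ^ (1 / p)) *
        (∑' B : Paper.G1 R A, (‖x (B : Set Ω)‖₊ : ℝ≥0∞) ^ p *
          eLpNorm (fun ω =>
              (P (B : Set Ω)).toReal *
                Set.indicator (F.star (sel (B : Set Ω)).1 (sel (B : Set Ω)).2)
                  (fun _ => (1 : ℝ)) ω -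
              (P (F.star (sel (B : Set Ω)).1 (sel (B : Set Ω)).2)).toReal *
                Set.indicator (B : Set Ω) (fun _ => (1 : ℝ)) ω)
            (ENNReal.ofReal p) P ^ p) ^ (1 / p) := by
  have hG1 : Paper.G1 R A ⊆ F.tildes := fun B hB =>
    ⟨(sel B).1, (sel B).2, (hsel B hB).1, (hsel B hB).2⟩
  have : Countable (Paper.G1 R A) := (F.countable_tildes.mono hG1).to_subtype
  have hdisj : Pairwise fun B C : Paper.G1 R A => Disjoint (B : Set Ω) C := fun B C hBC =>
    Paper.pairwiseDisjoint_G1_of_nested (F.nested_tildes.mono hG1) B.2 C.2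
      (Subtype.coe_ne_coe.mpr hBC)
  have hconst : ENNReal.ofReal M + 1 ≤
      ENNReal.ofReal ((2 : ℝ) ^ (1 - 1 / p) * (1 + M ^ p) ^ (1 / p)) := by
    have h := Paper.add_le_two_rpow_mul_rpow_add_rpow zero_le_one (zero_le_one.trans hM.1) hp1.le
    rw [Real.one_rpow] at h
    rw [← ENNReal.ofReal_one, ← ENNReal.ofReal_add (zero_le_one.trans hM.1) zero_le_one, add_comm]
    exact ENNReal.ofReal_le_ofReal h
  refine Paper.eLpNorm_le_of_hasSum_ae (fun B => ?_) hf fun s => ?_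
  · exact (aestronglyMeasurable_const.indicator
      (F.measurableSet_star (hsel B B.2).1)).const_smul _
  · refine (F.eLpNorm_sum_smul_indicator_star_le (lvl := fun B : Paper.G1 R A => (sel B).1)
      (atm := fun B : Paper.G1 R A => (sel B).2) hM hp1 (fun B => (hsel B B.2).1)
      (fun B => (hsel B B.2).2) Subtype.val_injective hdisj s fun B => x B).trans ?_
    exact mul_le_mul' hconst (by gcongr; exact ENNReal.sum_le_tsum s)

open MeasureTheory ENNReal in
/-- single-generation estimate, Lemma `singlecol`.  The function
`sel` selects for each `B̃ ∈ G_1(R,A) ⊆ ℬ` an occurrence `(n, B)` with `B ∈ 𝒜_n` and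
`B̃ = B \ star B`, so that `F.star (sel B̃).1 (sel B̃).2` is `star(B)`. -/
theorem statement_13 {Ω : Type*} [m0 : MeasurableSpace Ω] (P : Measure Ω)
    [IsProbabilityMeasure P] (F : Paper.FilteredAtomic Ω P)
    (p : ℝ) (hp1 : 1 < p) (hp2 : p ≤ 2)
    (M : ℝ) (hM : Paper.ScalarMT F p M)
    (R : Set (Set Ω)) (hR : R ⊆ F.bColl)
    (A : Set Ω) (hA : MeasurableSet A)
    (sel : Set Ω → ℕ × Set Ω)
    (hsel : ∀ B ∈ Paper.G1 R A,
      (sel B).2 ∈ F.part (sel B).1 ∧ B = (sel B).2 \ F.star (sel B).1 (sel B).2)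
    (X : Type*) [NormedAddCommGroup X] [NormedSpace ℝ X] [CompleteSpace X]
    (x : Set Ω → X) (f : Ω → X)
    (hf : ∀ᵐ ω ∂P, HasSum (fun B : Paper.G1 R A =>
      (P (B : Set Ω)).toReal •
        Set.indicator (F.star (sel (B : Set Ω)).1 (sel (B : Set Ω)).2)
          (fun _ => x (B : Set Ω)) ω) (f ω)) :
    eLpNorm f (ENNReal.ofReal p) P ≤
      ENNReal.ofReal ((2 : ℝ) ^ (1 - 1 / p) * (1 + M ^ p) ^ (1 / p)) *
        (∑' B : Paper.G1 R A, (‖x (B : Set Ω)‖₊ : ℝ≥0∞) ^ p *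
          eLpNorm (fun ω =>
              (P (B : Set Ω)).toReal *
                Set.indicator (F.star (sel (B : Set Ω)).1 (sel (B : Set Ω)).2)
                  (fun _ => (1 : ℝ)) ω -
              (P (F.star (sel (B : Set Ω)).1 (sel (B : Set Ω)).2)).toReal *
                Set.indicator (B : Set Ω) (fun _ => (1 : ℝ)) ω)
            (ENNReal.ofReal p) P ^ p) ^ (1 / p) :=
  statement_13_general (m0 := m0) P F p hp1 M hM R A sel hsel X x f hf
end
end

section
/- Let 1 < p < 2, let (Ω, F, P) be a probability space with an increasing sequence (F_j)_{j≥1} of sub-σ-algebras of F, and set F_0 the trivial σ-algebra. Let S ∈ F, let K > 0, and let g : Ω → [−1, 1] be a measurable function with supp g ⊆ S and ∑_{j≥1} ‖E[g | F_j] − E[g | F_{j−1}]‖_{L¹(Ω)} ≤ K · P(S). Then ∑_{j≥1} ‖E[g | F_j] − E[g | F_{j−1}]‖_{L^p(Ω)}^p ≤ K^{2−p} · P(S). -/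
open MeasureTheory ENNReal

noncomputable section

/-!
Write `dⱼ = E[g | F_{j+1}] - E[g | F_j]`. The martingale differences are orthogonal in `L²`, so
`∑ ‖dⱼ‖₂² ≤ ‖g‖₂² ≤ P(S)` because `|g| ≤ 1_S`. Hölder's inequality with exponents `1/(2-p)` and
`1/(p-1)` interpolates `‖dⱼ‖_p^p ≤ ‖dⱼ‖₁^{2-p} (‖dⱼ‖₂²)^{p-1}`, and the same inequality for sums
over `j` gives `∑ ‖dⱼ‖_p^p ≤ (∑ ‖dⱼ‖₁)^{2-p} (∑ ‖dⱼ‖₂²)^{p-1} ≤ (K P(S))^{2-p} P(S)^{p-1}`.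
-/

theorem ENNReal.tsum_rpow_mul_rpow_le {ι : Type*} (f g : ι → ℝ≥0∞) {a b : ℝ} (ha : 0 ≤ a)
    (hb : 0 ≤ b) (hab : a + b = 1) :
    ∑' i, f i ^ a * g i ^ b ≤ (∑' i, f i) ^ a * (∑' i, g i) ^ b := by
  let _ : MeasurableSpace ι := ⊤
  simpa only [lintegral_count] using
    lintegral_mul_norm_pow_le (μ := Measure.count) (measurable_from_top (f := f)).aemeasurable
      (measurable_from_top (f := g)).aemeasurable ha hb hab

namespace MeasureTheory

variable {α : Type*} {m m₁ m₂ m0 : MeasurableSpace α} {μ : Measure α}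

theorem lintegral_rpow_le_lintegral_mul_lintegral_sq {f : α → ℝ≥0∞} (hf : AEMeasurable f μ)
    {p : ℝ} (hp1 : 1 ≤ p) (hp2 : p ≤ 2) :
    ∫⁻ x, f x ^ p ∂μ ≤ (∫⁻ x, f x ∂μ) ^ (2 - p) * (∫⁻ x, f x ^ (2 : ℝ) ∂μ) ^ (p - 1) := by
  have hsplit : ∀ x, f x ^ p = f x ^ (2 - p) * (f x ^ (2 : ℝ)) ^ (p - 1) := fun x => by
    rw [← ENNReal.rpow_mul, ← ENNReal.rpow_add_of_nonneg _ _ (by linarith) (by nlinarith)]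
    ring_nf
  simp_rw [hsplit]
  exact lintegral_mul_norm_pow_le hf (hf.pow_const _) (by linarith) (by linarith) (by ring)

theorem eLpNorm_ofReal_rpow_eq_lintegral {E : Type*} [NormedAddCommGroup E] {f : α → E} {p : ℝ}
    (hp : 0 < p) : eLpNorm f (ENNReal.ofReal p) μ ^ p = ∫⁻ x, ‖f x‖ₑ ^ p ∂μ := by
  rw [eLpNorm_eq_lintegral_rpow_enorm_toReal (by simpa using hp) ofReal_ne_top,
    toReal_ofReal hp.le, ← ENNReal.rpow_mul, one_div_mul_cancel hp.ne', ENNReal.rpow_one]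

theorem lintegral_enorm_rpow_le_measure {E : Type*} [NormedAddCommGroup E] {g : α → E}
    {S : Set α} (hg : ∀ x, ‖g x‖ ≤ 1) (hsupp : Function.support g ⊆ S) {q : ℝ} (hq : 0 < q) :
    ∫⁻ x, ‖g x‖ₑ ^ q ∂μ ≤ μ S := by
  refine (lintegral_mono fun x => ?_).trans (lintegral_indicator_one_le S)
  by_cases hx : x ∈ S
  · simpa [Set.indicator_of_mem hx] using
      ENNReal.rpow_le_one (by rw [← ofReal_norm]; exact ofReal_le_one.2 (hg x)) hq.le
  · have : g x = 0 := Function.notMem_support.1 fun h => hx (hsupp h)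
    simp [this, Set.indicator_of_notMem hx, hq]

theorem ofReal_integral_sq_eq_lintegral {f : α → ℝ} (hf : MemLp f 2 μ) :
    ENNReal.ofReal (∫ x, f x ^ 2 ∂μ) = ∫⁻ x, ‖f x‖ₑ ^ (2 : ℝ) ∂μ := by
  rw [ofReal_integral_eq_lintegral_ofReal hf.integrable_sq (ae_of_all _ fun x => sq_nonneg _)]
  refine lintegral_congr fun x => ?_
  rw [Real.enorm_eq_ofReal_abs, ENNReal.ofReal_rpow_of_nonneg (abs_nonneg _) zero_le_two,
    Real.rpow_two, sq_abs]

theorem integral_mul_condExp_of_stronglyMeasurable (hm : m ≤ m0) [SigmaFinite (μ.trim hm)]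
    {h g : α → ℝ} (hh : StronglyMeasurable[m] h) (hhg : Integrable (h * g) μ)
    (hg : Integrable g μ) :
    ∫ x, h x * μ[g|m] x ∂μ = ∫ x, h x * g x ∂μ :=
  calc ∫ x, h x * μ[g|m] x ∂μ = ∫ x, μ[h * g|m] x ∂μ :=
        integral_congr_ae (condExp_mul_of_stronglyMeasurable_left hh hhg hg).symm
    _ = ∫ x, h x * g x ∂μ := integral_condExp hm

theorem integral_condExp_sub_condExp_sq [IsFiniteMeasure μ] (h₁₂ : m₁ ≤ m₂) (hm₂ : m₂ ≤ m0)
    {g : α → ℝ} (hg : MemLp g 2 μ) :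
    ∫ x, (μ[g|m₂] x - μ[g|m₁] x) ^ 2 ∂μ = ∫ x, μ[g|m₂] x ^ 2 ∂μ - ∫ x, μ[g|m₁] x ^ 2 ∂μ := by
  set f₁ := μ[g|m₁]
  set f₂ := μ[g|m₂]
  have hf₁ : MemLp f₁ 2 μ := hg.condExp one_le_two
  have hf₂ : MemLp f₂ 2 μ := hg.condExp one_le_two
  have hf₁g : Integrable (f₁ * g) μ := hf₁.integrable_mul hg
  have hg₁ : Integrable g μ := hg.integrable one_le_two
  -- both sides equal `∫ f₁ g`, since `f₁` is `m₁`- and hence `m₂`-measurable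
  have hcross : ∫ x, f₁ x * f₂ x ∂μ = ∫ x, f₁ x ^ 2 ∂μ := by
    simp_rw [sq]
    rw [integral_mul_condExp_of_stronglyMeasurable hm₂
        (stronglyMeasurable_condExp.mono h₁₂) hf₁g hg₁,
      integral_mul_condExp_of_stronglyMeasurable (h₁₂.trans hm₂) stronglyMeasurable_condExp
        hf₁g hg₁]
  have hexpand : ∀ x, (f₂ x - f₁ x) ^ 2 = f₂ x ^ 2 - 2 * (f₁ x * f₂ x) + f₁ x ^ 2 :=
    fun x => by ring
  have hcross_int : Integrable (fun x => 2 * (f₁ x * f₂ x)) μ :=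
    (hf₁.integrable_mul hf₂).const_mul 2
  have hdiff_int : Integrable (fun x => f₂ x ^ 2 - 2 * (f₁ x * f₂ x)) μ :=
    hf₂.integrable_sq.sub hcross_int
  simp_rw [hexpand]
  rw [integral_add hdiff_int hf₁.integrable_sq,
    integral_sub hf₂.integrable_sq hcross_int, integral_const_mul, hcross]
  ring

theorem integral_condExp_sq_le {g : α → ℝ} (hg : MemLp g 2 μ) :
    ∫ x, μ[g|m] x ^ 2 ∂μ ≤ ∫ x, g x ^ 2 ∂μ := by
  have h := integral_norm_condExp_rpow_le (m := m) (μ := μ) (f := g) one_le_two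
    (by simpa only [Real.norm_eq_abs, Real.rpow_two, sq_abs] using hg.integrable_sq)
  simpa only [Real.norm_eq_abs, Real.rpow_two, sq_abs] using h

theorem tsum_lintegral_condExp_sub_sq_le [IsFiniteMeasure μ] {F : ℕ → MeasurableSpace α}
    (hmono : Monotone F) (hle : ∀ j, F j ≤ m0) {g : α → ℝ} (hg : MemLp g 2 μ) :
    ∑' j, ∫⁻ x, ‖μ[g|F (j + 1)] x - μ[g|F j] x‖ₑ ^ (2 : ℝ) ∂μ ≤ ∫⁻ x, ‖g x‖ₑ ^ (2 : ℝ) ∂μ := by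
  refine ENNReal.tsum_le_of_sum_range_le fun N => ?_
  have htelescope : ∑ j ∈ Finset.range N, ∫ x, (μ[g|F (j + 1)] x - μ[g|F j] x) ^ 2 ∂μ =
      ∫ x, μ[g|F N] x ^ 2 ∂μ - ∫ x, μ[g|F 0] x ^ 2 ∂μ := by
    simp_rw [integral_condExp_sub_condExp_sq (hmono (Nat.le_succ _)) (hle _) hg]
    exact Finset.sum_range_sub (fun n => ∫ x, μ[g|F n] x ^ 2 ∂μ) N
  have hbound : ∑ j ∈ Finset.range N, ∫ x, (μ[g|F (j + 1)] x - μ[g|F j] x) ^ 2 ∂μ ≤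
      ∫ x, g x ^ 2 ∂μ := by
    rw [htelescope]
    linarith [integral_condExp_sq_le (m := F N) hg,
      integral_nonneg (μ := μ) (f := fun x => μ[g|F 0] x ^ 2) fun x => sq_nonneg _]
  calc ∑ j ∈ Finset.range N, ∫⁻ x, ‖μ[g|F (j + 1)] x - μ[g|F j] x‖ₑ ^ (2 : ℝ) ∂μ
      = ENNReal.ofReal
          (∑ j ∈ Finset.range N, ∫ x, (μ[g|F (j + 1)] x - μ[g|F j] x) ^ 2 ∂μ) := by
        rw [ofReal_sum_of_nonneg fun j _ => integral_nonneg fun x => sq_nonneg _]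
        refine Finset.sum_congr rfl fun j _ => ?_
        exact (ofReal_integral_sq_eq_lintegral
          ((hg.condExp one_le_two).sub (hg.condExp one_le_two))).symm
    _ ≤ ENNReal.ofReal (∫ x, g x ^ 2 ∂μ) := ofReal_le_ofReal hbound
    _ = ∫⁻ x, ‖g x‖ₑ ^ (2 : ℝ) ∂μ := ofReal_integral_sq_eq_lintegral hg

end MeasureTheory

open MeasureTheory ENNReal in
theorem statement_17_general (p : ℝ) (hp1 : 1 < p) (hp2 : p < 2)
    {Ω : Type*} [m0 : MeasurableSpace Ω] (P : Measure Ω) [IsProbabilityMeasure P]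
    (F : ℕ → MeasurableSpace Ω) (hmono : Monotone F) (hle : ∀ j, F j ≤ m0)
    (S : Set Ω)
    (K : ℝ) (hK : 0 < K)
    (g : Ω → ℝ) (hgmeas : Measurable g) (hgb : ∀ ω, g ω ∈ Set.Icc (-1 : ℝ) 1)
    (hsupp : Function.support g ⊆ S)
    (hvar : ∑' j : ℕ, eLpNorm (P[g|F (j + 1)] - P[g|F j]) 1 P ≤ ENNReal.ofReal K * P S) :
    ∑' j : ℕ, eLpNorm (P[g|F (j + 1)] - P[g|F j]) (ENNReal.ofReal p) P ^ p ≤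
      ENNReal.ofReal (K ^ (2 - p)) * P S := by
  have hg_le : ∀ ω, ‖g ω‖ ≤ 1 := fun ω => abs_le.2 (hgb ω)
  have hg2 : MemLp g 2 P := .of_bound hgmeas.aestronglyMeasurable 1 (ae_of_all _ hg_le)
  have hL2 : ∑' j, ∫⁻ ω, ‖P[g|F (j + 1)] ω - P[g|F j] ω‖ₑ ^ (2 : ℝ) ∂P ≤ P S :=
    (tsum_lintegral_condExp_sub_sq_le hmono hle hg2).trans
      (lintegral_enorm_rpow_le_measure hg_le hsupp two_pos)
  have hL1 : ∑' j, ∫⁻ ω, ‖P[g|F (j + 1)] ω - P[g|F j] ω‖ₑ ∂P ≤ ENNReal.ofReal K * P S := by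
    simpa only [eLpNorm_one_eq_lintegral_enorm, Pi.sub_apply] using hvar
  calc ∑' j, eLpNorm (P[g|F (j + 1)] - P[g|F j]) (ENNReal.ofReal p) P ^ p
      = ∑' j, ∫⁻ ω, ‖P[g|F (j + 1)] ω - P[g|F j] ω‖ₑ ^ p ∂P := by
        simp_rw [eLpNorm_ofReal_rpow_eq_lintegral (by linarith : 0 < p), Pi.sub_apply]
    _ ≤ ∑' j, (∫⁻ ω, ‖P[g|F (j + 1)] ω - P[g|F j] ω‖ₑ ∂P) ^ (2 - p) *
          (∫⁻ ω, ‖P[g|F (j + 1)] ω - P[g|F j] ω‖ₑ ^ (2 : ℝ) ∂P) ^ (p - 1) :=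
        ENNReal.tsum_le_tsum fun j => lintegral_rpow_le_lintegral_mul_lintegral_sq
          (f := fun ω => ‖P[g|F (j + 1)] ω - P[g|F j] ω‖ₑ)
          (integrable_condExp.sub integrable_condExp).aemeasurable.enorm hp1.le hp2.le
    _ ≤ (∑' j, ∫⁻ ω, ‖P[g|F (j + 1)] ω - P[g|F j] ω‖ₑ ∂P) ^ (2 - p) *
          (∑' j, ∫⁻ ω, ‖P[g|F (j + 1)] ω - P[g|F j] ω‖ₑ ^ (2 : ℝ) ∂P) ^ (p - 1) :=
        ENNReal.tsum_rpow_mul_rpow_le _ _ (by linarith) (by linarith) (by ring)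
    _ ≤ (ENNReal.ofReal K * P S) ^ (2 - p) * P S ^ (p - 1) :=
        mul_le_mul' (rpow_le_rpow hL1 (by linarith)) (rpow_le_rpow hL2 (by linarith))
    _ = ENNReal.ofReal (K ^ (2 - p)) * P S := by
        rw [mul_rpow_of_nonneg _ _ (by linarith), mul_assoc,
          ← rpow_add_of_nonneg _ _ (by linarith) (by linarith),
          show 2 - p + (p - 1) = 1 by ring, rpow_one, ofReal_rpow_of_pos hK]

open MeasureTheory ENNReal in
/-- interpolation of the variational bound: `L¹` control of the martingale
differences of a bounded function gives `ℓ^p(L^p)` control. -/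
theorem statement_17 (p : ℝ) (hp1 : 1 < p) (hp2 : p < 2)
    {Ω : Type*} [m0 : MeasurableSpace Ω] (P : Measure Ω) [IsProbabilityMeasure P]
    (F : ℕ → MeasurableSpace Ω) (hmono : Monotone F) (hle : ∀ j, F j ≤ m0)
    (hF0 : F 0 = ⊥)
    (S : Set Ω) (hS : MeasurableSet S)
    (K : ℝ) (hK : 0 < K)
    (g : Ω → ℝ) (hgmeas : Measurable g) (hgb : ∀ ω, g ω ∈ Set.Icc (-1 : ℝ) 1)
    (hsupp : Function.support g ⊆ S)
    (hvar : ∑' j : ℕ, eLpNorm (P[g|F (j + 1)] - P[g|F j]) 1 P ≤ ENNReal.ofReal K * P S) :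
    ∑' j : ℕ, eLpNorm (P[g|F (j + 1)] - P[g|F j]) (ENNReal.ofReal p) P ^ p ≤
      ENNReal.ofReal (K ^ (2 - p)) * P S :=
  statement_17_general p hp1 hp2 (m0 := m0) P F hmono hle S K hK g hgmeas hgb hsupp hvar
end
end
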